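/- arXiv:1309.3920 — 6 statements merged into one kernel-verified Lean document; each statement's English description precedes it below -/
import Mathlib

section
/- For positive integers s_1,...,s_l, [s_1,...,s_l](q) = (1/((s_1-1)!⋯(s_l-1)!)) Σ_{n_1 > ... > n_l > 0} Π_{j=1}^l q^{n_j} P_{s_j-1}(q^{n_j}) / (1-q^{n_j})^{s_j}, where P_k is the k-th Eulerian polynomial, valid for |q| < 1. -/
open Finset Function fwdDiff


lemma fwdDiff_iter_pow_eq_zero (h : ℂ) : ∀ s : ℕ, ∀ k : ℕ, s < k →
    (Δ_[h])^[k] (fun x : ℂ => x ^ s) = 0 := by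
  intro s
  induction s using Nat.strong_induction_on with
  | _ s ih =>
    intro k hk
    obtain ⟨k, rfl⟩ : ∃ k', k = k' + 1 := ⟨k - 1, by omega⟩
    rw [Function.iterate_succ_apply]
    have hstep : Δ_[h] (fun x : ℂ => x ^ s)
        = ∑ t ∈ Finset.range s, ((s.choose t : ℂ) * h ^ (s - t)) • (fun x : ℂ => x ^ t) := by
      ext x
      simp only [fwdDiff, Finset.sum_apply, Pi.smul_apply, smul_eq_mul]
      rw [add_pow]
      rw [Finset.sum_range_succ]
      simp [Nat.choose_self]
      rw [Finset.sum_congr rfl (fun t ht => ?_)]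
      ring
    rw [hstep, fwdDiff_iter_finset_sum]
    refine Finset.sum_eq_zero fun t ht => ?_
    have ht' : t < s := Finset.mem_range.mp ht
    rw [fwdDiff_iter_const_smul, ih t ht' k (by omega), smul_zero]

lemma alt_sum_pow_eq_zero (s k : ℕ) (hk : s < k) (m : ℂ) :
    ∑ i ∈ Finset.range (k + 1), (-1 : ℂ) ^ i * (k.choose i : ℂ) * (m - i) ^ s = 0 := by
  have h0 := fwdDiff_iter_eq_sum_shift (-1 : ℂ) (fun x : ℂ => x ^ s) k m
  rw [fwdDiff_iter_pow_eq_zero (-1) s k hk] at h0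
  have h1 : ∑ i ∈ Finset.range (k + 1), (-1 : ℂ) ^ i * (k.choose i : ℂ) * (m - i) ^ s
      = (-1 : ℂ) ^ k * ∑ i ∈ Finset.range (k + 1),
        (((-1 : ℤ) ^ (k - i) * (k.choose i : ℤ)) • (m + (i : ℕ) • (-1 : ℂ)) ^ s) := by
    rw [Finset.mul_sum]
    refine Finset.sum_congr rfl fun i hi => ?_
    have hik : i ≤ k := by simpa using Nat.lt_succ_iff.mp (Finset.mem_range.mp hi)
    have : m + (i : ℕ) • (-1 : ℂ) = m - i := by
      simp [nsmul_eq_mul]; ring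
    rw [this, zsmul_eq_mul]
    push_cast
    rw [show (-1 : ℂ) ^ k * ((-1) ^ (k - i) * (k.choose i : ℂ) * (m - i) ^ s)
        = ((-1 : ℂ) ^ k * (-1) ^ (k - i)) * (k.choose i : ℂ) * (m - i) ^ s by ring]
    congr 2
    rw [← pow_add]
    have : k + (k - i) = 2 * (k - i) + i := by omega
    rw [this, pow_add, pow_mul]
    simp
  rw [h1, ← h0]
  simp




/-- The multiple divisor sum `σ_{r_1,...,r_l}(n)`. -/
def msigma {l : ℕ} (r : Fin l → ℕ) (n : ℕ) : ℕ :=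
  ∑ f ∈ (Fintype.piFinset fun _ : Fin l =>
      Finset.range (n + 1) ×ˢ Finset.range (n + 1)).filter
      (fun f => (∑ i, (f i).1 * (f i).2) = n ∧ (∀ i, 0 < (f i).1) ∧
        (∀ i, 0 < (f i).2) ∧ ∀ i j : Fin l, i < j → (f j).1 < (f i).1),
    ∏ i, (f i).2 ^ r i

/-- The bracket `[s_1,...,s_l](q)` as a function of `q`. -/
noncomputable def bracketFn {l : ℕ} (s : Fin l → ℕ) (q : ℂ) : ℂ :=
  (∏ i, ((s i - 1).factorial : ℂ))⁻¹ *
    ∑' n : ℕ, (msigma (fun i => s i - 1) n : ℂ) * q ^ n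

/-- The Eulerian numbers `A_{s,n} = Σ_{i=0}^n (-1)^i C(s+1,i)(n+1-i)^s`. -/
def eulerianNumber (s n : ℕ) : ℤ :=
  ∑ i ∈ Finset.range (n + 1), (-1 : ℤ) ^ i * (s + 1).choose i * ((n + 1 - i : ℕ) : ℤ) ^ s

/-- The `s`-th Eulerian polynomial `P_s(X) = Σ_{n=0}^{s-1} A_{s,n} X^n` (with `P_0 = 1`). -/
noncomputable def eulerianPoly (s : ℕ) : Polynomial ℤ :=
  if s = 0 then 1 else
    ∑ n ∈ Finset.range s, Polynomial.C (eulerianNumber s n) * Polynomial.X ^ n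


lemma summable_real_pow_mul_geom (k : ℕ) {z : ℂ} (hz : ‖z‖ < 1) :
    Summable (fun n : ℕ => (n : ℝ) ^ k * ‖z‖ ^ n) := by
  have := summable_pow_mul_geometric_of_norm_lt_one (R := ℝ) k
    (r := ‖z‖) (by simpa [abs_of_nonneg (norm_nonneg z)] using hz)
  simpa using this

lemma summable_norm_pow_mul_geom (k : ℕ) {z : ℂ} (hz : ‖z‖ < 1) :
    Summable (fun n : ℕ => ‖((n : ℂ)) ^ k * z ^ n‖) := by
  refine (summable_real_pow_mul_geom k hz).congr fun n => ?_
  simp [map_mul, map_pow]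

lemma eulerian_gen (s : ℕ) {z : ℂ} (hz : ‖z‖ < 1) :
    ∑' d : ℕ, ((d : ℂ) + 1) ^ s * z ^ (d + 1)
      = z * (Polynomial.aeval z (eulerianPoly s)) / (1 - z) ^ (s + 1) := by
  have hz1 : (1 : ℂ) - z ≠ 0 := sub_ne_zero.mpr (fun h => by rw [← h] at hz; simp at hz)
  rcases Nat.eq_zero_or_pos s with rfl | hs
  · have hP : (Polynomial.aeval z) (eulerianPoly 0) = 1 := by simp [eulerianPoly]
    rw [hP, mul_one]
    simp only [pow_zero, one_mul, pow_one]
    have h0 : ∀ d : ℕ, z ^ (d + 1) = z * z ^ d := fun d => by ring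
    simp_rw [h0]
    rw [tsum_mul_left, tsum_geometric_of_norm_lt_one (by simpa using hz), div_eq_mul_inv]
    norm_num
  have hsum : Summable (fun n : ℕ => (n : ℂ) ^ s * z ^ n) :=
    (summable_norm_pow_mul_geom s hz).of_norm
  have hA : ∑' d : ℕ, ((d : ℂ) + 1) ^ s * z ^ (d + 1) = ∑' n : ℕ, (n : ℂ) ^ s * z ^ n := by
    rw [Summable.tsum_eq_zero_add hsum]
    push_cast
    rw [zero_pow hs.ne', zero_mul, zero_add]
  rw [hA]
  set A := ∑' n : ℕ, (n : ℂ) ^ s * z ^ n with hAdef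
  set F : ℕ → ℕ → ℂ :=
    fun i m => (if i ≤ m then (((m - i : ℕ) : ℂ)) ^ s else 0) * z ^ m with hFdef
  have hF : ∀ i : ℕ, Summable (F i) := by
    intro i
    apply Summable.of_norm
    refine Summable.of_nonneg_of_le (fun m => norm_nonneg _) (fun m => ?_)
      (summable_real_pow_mul_geom s hz)
    simp only [hFdef, norm_mul, norm_pow]
    by_cases him : i ≤ m
    · rw [if_pos him]
      refine mul_le_mul_of_nonneg_right ?_ (by positivity)
      rw [norm_pow]
      refine pow_le_pow_left₀ (norm_nonneg _) ?_ s
      rw [Complex.norm_natCast]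
      exact_mod_cast Nat.sub_le m i
    · rw [if_neg him]
      simp only [map_zero, norm_zero, zero_mul]
      positivity
  have step1 : ∀ i : ℕ, z ^ i * A = ∑' m : ℕ, F i m := by
    intro i
    rw [hAdef, ← tsum_mul_left]
    rw [← Function.Injective.tsum_eq (g := fun n : ℕ => n + i)
      (add_left_injective i) (f := F i) ?_]
    · refine tsum_congr fun n => ?_
      simp only [hFdef]
      rw [if_pos (Nat.le_add_left i n), Nat.add_sub_cancel, pow_add]
      ring
    · intro m hm
      by_cases him : i ≤ m
      · exact ⟨m - i, show m - i + i = m by omega⟩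
      · exact absurd (by simp [hFdef, him]) hm
  have expand : (1 - z) ^ (s + 1)
      = ∑ i ∈ Finset.range (s + 2), (-1 : ℂ) ^ i * ((s + 1).choose i : ℂ) * z ^ i := by
    rw [sub_eq_add_neg, add_comm, add_pow]
    refine Finset.sum_congr rfl fun i _ => ?_
    rw [neg_pow]
    ring
  set c : ℕ → ℂ := fun m => ∑ i ∈ Finset.range (s + 2),
    (-1 : ℂ) ^ i * ((s + 1).choose i : ℂ) * (if i ≤ m then (((m - i : ℕ) : ℂ)) ^ s else 0)
    with hcdef
  have key : (1 - z) ^ (s + 1) * A = z * Polynomial.aeval z (eulerianPoly s) := by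
    have e1 : (1 - z) ^ (s + 1) * A
        = ∑ i ∈ Finset.range (s + 2),
            (-1 : ℂ) ^ i * ((s + 1).choose i : ℂ) * (z ^ i * A) := by
      rw [expand, Finset.sum_mul]
      exact Finset.sum_congr rfl fun i _ => by ring
    rw [e1]
    have e2 : ∑ i ∈ Finset.range (s + 2),
        (-1 : ℂ) ^ i * ((s + 1).choose i : ℂ) * (z ^ i * A)
        = ∑' m : ℕ, c m * z ^ m := by
      simp_rw [step1]
      have : ∀ i : ℕ, (-1 : ℂ) ^ i * ((s + 1).choose i : ℂ) * (∑' m : ℕ, F i m)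
          = ∑' m : ℕ, (-1 : ℂ) ^ i * ((s + 1).choose i : ℂ) * F i m :=
        fun i => (tsum_mul_left).symm
      simp_rw [this]
      rw [← Summable.tsum_finsetSum (fun i _ => (hF i).mul_left _)]
      refine tsum_congr fun m => ?_
      simp only [hcdef, Finset.sum_mul]
      exact Finset.sum_congr rfl fun i _ => by simp only [hFdef]; ring
    rw [e2]
    have e3 : ∑' m : ℕ, c m * z ^ m = ∑ m ∈ Finset.range (s + 1), c m * z ^ m := by
      refine tsum_eq_sum fun m hm => ?_
      have hm' : s + 1 ≤ m := by simpa using hm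
      have hc : c m = 0 := by
        rw [← alt_sum_pow_eq_zero s (s + 1) (Nat.lt_succ_self s) (m : ℂ)]
        simp only [hcdef]
        refine Finset.sum_congr rfl fun i hi => ?_
        have hi' : i ≤ m := by simp only [Finset.mem_range] at hi; omega
        rw [if_pos hi']
        have : ((m - i : ℕ) : ℂ) = (m : ℂ) - i := by
          push_cast [Nat.cast_sub hi']
          ring
        rw [this]
      rw [hc, zero_mul]
    rw [e3, Finset.sum_range_succ']
    have hc0 : c 0 = 0 := by
      simp only [hcdef]
      refine Finset.sum_eq_zero fun i hi => ?_
      rcases Nat.eq_zero_or_pos i with rfl | hipos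
      · simp [zero_pow hs.ne']
      · rw [if_neg (by omega), mul_zero]
    rw [hc0, zero_mul, add_zero]
    have hcn : ∀ n ∈ Finset.range s, c (n + 1) * z ^ (n + 1)
        = z * ((eulerianNumber s n : ℂ) * z ^ n) := by
      intro n hn
      have hns : n < s := Finset.mem_range.mp hn
      have hce : c (n + 1) = (eulerianNumber s n : ℂ) := by
        have hzero : ∀ i ∈ Finset.range (s + 2), i ∉ Finset.range (n + 1) →
            (-1 : ℂ) ^ i * ((s + 1).choose i : ℂ)
              * (if i ≤ n + 1 then (((n + 1 - i : ℕ) : ℂ)) ^ s else 0) = 0 := by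
          intro i _ hni
          have h1 : n + 1 ≤ i := by simpa [Nat.lt_succ_iff] using hni
          by_cases hi2 : i = n + 1
          · subst hi2
            simp [zero_pow hs.ne']
          · rw [if_neg (by omega), mul_zero]
        simp only [hcdef]
        rw [← Finset.sum_subset (Finset.range_subset_range.mpr (show n + 1 ≤ s + 2 by omega)) hzero]
        rw [eulerianNumber]
        push_cast
        refine Finset.sum_congr rfl fun i hi => ?_
        have hi' : i ≤ n := by simpa [Nat.lt_succ_iff] using hi
        rw [if_pos (by omega)]
      rw [hce]; ring
    rw [Finset.sum_congr rfl hcn, ← Finset.mul_sum]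
    congr 1
    rw [eulerianPoly, if_neg hs.ne']
    simp
  rw [eq_div_iff (pow_ne_zero _ hz1)]
  linear_combination key

lemma consEquiv_apply' {β : Type*} {l : ℕ} (x : β) (d : Fin l → β) :
    (Fin.consEquiv (fun _ : Fin (l + 1) => β)) (x, d) = Fin.cons x d := rfl

lemma summable_pi_prod {β : Type*} : ∀ {l : ℕ} (f : Fin l → β → ℝ),
    (∀ i b, 0 ≤ f i b) → (∀ i, Summable (f i)) →
    Summable (fun d : Fin l → β => ∏ i, f i (d i)) := by
  intro l
  induction l with
  | zero =>
    intro f _ _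
    exact summable_of_finite_support (Set.toFinite _)
  | succ l ih =>
    intro f h0 hf
    rw [← Equiv.summable_iff (Fin.consEquiv (fun _ : Fin (l + 1) => β))]
    have hcongr : ∀ p : β × (Fin l → β),
        ∏ i, f i ((Fin.consEquiv (fun _ : Fin (l + 1) => β)) p i)
          = f 0 p.1 * ∏ i : Fin l, f i.succ (p.2 i) := by
      rintro ⟨x, d⟩
      rw [consEquiv_apply', Fin.prod_univ_succ]
      simp
    refine Summable.congr ?_ (fun p => (hcongr p).symm)
    exact Summable.mul_of_nonneg (f := f 0)
      (g := fun d : Fin l → β => ∏ i : Fin l, f i.succ (d i)) (hf 0)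
      (ih _ (fun i b => h0 _ _) (fun i => hf i.succ))
      (fun b => h0 0 b)
      (fun d => Finset.prod_nonneg fun i _ => h0 _ _)

lemma summable_norm_pi_prod {β : Type*} {l : ℕ} (f : Fin l → β → ℂ)
    (hf : ∀ i, Summable (fun b => ‖f i b‖)) :
    Summable (fun d : Fin l → β => ‖∏ i, f i (d i)‖) := by
  have := summable_pi_prod (fun i b => ‖f i b‖) (fun i b => norm_nonneg _) hf
  refine this.congr fun d => ?_
  rw [norm_prod]

lemma tsum_pi_prod {β : Type*} : ∀ {l : ℕ} (f : Fin l → β → ℂ),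
    (∀ i, Summable (fun b => ‖f i b‖)) →
    ∑' d : Fin l → β, ∏ i, f i (d i) = ∏ i, ∑' b, f i b := by
  intro l
  induction l with
  | zero =>
    intro f _
    rw [tsum_eq_single (default) (fun b hb => absurd (Subsingleton.elim b _) hb)]
    simp
  | succ l ih =>
    intro f hf
    rw [← Equiv.tsum_eq (Fin.consEquiv (fun _ : Fin (l + 1) => β)) (fun d => ∏ i, f i (d i))]
    have hcongr : ∀ p : β × (Fin l → β),
        ∏ i, f i ((Fin.consEquiv (fun _ : Fin (l + 1) => β)) p i)
          = f 0 p.1 * ∏ i : Fin l, f i.succ (p.2 i) := by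
      rintro ⟨x, d⟩
      rw [consEquiv_apply', Fin.prod_univ_succ]
      simp
    rw [tsum_congr hcongr]
    have hnorm : Summable (fun d : Fin l → β => ‖∏ i : Fin l, f i.succ (d i)‖) :=
      summable_norm_pi_prod _ (fun i => hf i.succ)
    rw [← tsum_mul_tsum_of_summable_norm (hf 0) hnorm]
    rw [ih _ (fun i => hf i.succ), Fin.prod_univ_succ]

/-- Condition on a tuple of pairs: positive entries, strictly decreasing firsts. -/
def goodTuple {l : ℕ} (g : Fin l → ℕ × ℕ) : Prop :=
  (∀ i, 0 < (g i).1) ∧ (∀ i, 0 < (g i).2) ∧ ∀ i j : Fin l, i < j → (g j).1 < (g i).1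

open Classical in
/-- The master summand. -/
noncomputable def Fw {l : ℕ} (s : Fin l → ℕ) (q : ℂ) (g : Fin l → ℕ × ℕ) : ℂ :=
  if goodTuple g then (∏ i, ((g i).2 : ℂ) ^ (s i - 1)) * q ^ (∑ i, (g i).1 * (g i).2) else 0

lemma summable_norm_Fw {l : ℕ} (s : Fin l → ℕ) {q : ℂ} (hq : ‖q‖ < 1) :
    Summable (fun g : Fin l → ℕ × ℕ => ‖Fw s q g‖) := by
  set t := Real.sqrt (‖q‖) with ht
  have ht0 : 0 ≤ t := Real.sqrt_nonneg _
  have ht1 : t < 1 := by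
    rw [ht]
    rw [show (1 : ℝ) = Real.sqrt 1 by simp]
    exact Real.sqrt_lt_sqrt (norm_nonneg q) hq
  have htsq : ∀ n : ℕ, ‖q‖ ^ n = t ^ (2 * n) := by
    intro n
    rw [pow_mul, ht, Real.sq_sqrt (norm_nonneg q)]
  have hmaj : Summable (fun g : Fin l → ℕ × ℕ =>
      ∏ i, (t ^ (g i).1 * (((g i).2 : ℝ) ^ (s i - 1) * t ^ (g i).2))) := by
    refine summable_pi_prod
      (fun i (b : ℕ × ℕ) => t ^ b.1 * ((b.2 : ℝ) ^ (s i - 1) * t ^ b.2))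
      (fun i b => by positivity) (fun i => ?_)
    refine Summable.mul_of_nonneg (f := fun a : ℕ => t ^ a)
      (g := fun b : ℕ => (b : ℝ) ^ (s i - 1) * t ^ b)
      (summable_geometric_of_lt_one ht0 ht1) ?_ (fun a => by positivity)
      (fun b => by positivity)
    have := summable_pow_mul_geometric_of_norm_lt_one (R := ℝ) (s i - 1)
      (r := t) (by rwa [Real.norm_eq_abs, abs_of_nonneg ht0])
    simpa using this
  refine Summable.of_nonneg_of_le (fun g => norm_nonneg _) (fun g => ?_) hmaj
  rw [Fw]
  by_cases hg : goodTuple g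
  · rw [if_pos hg, norm_mul, norm_prod, norm_pow, htsq]
    have hsplit : t ^ (2 * ∑ i, (g i).1 * (g i).2)
        = ∏ i, t ^ (2 * ((g i).1 * (g i).2)) := by
      rw [Finset.prod_pow_eq_pow_sum, ← Finset.mul_sum]
    rw [hsplit, ← Finset.prod_mul_distrib]
    refine Finset.prod_le_prod (fun i _ => by positivity) (fun i _ => ?_)
    have hb : ‖((g i).2 : ℂ) ^ (s i - 1)‖ = ((g i).2 : ℝ) ^ (s i - 1) := by
      rw [norm_pow, Complex.norm_natCast]
    rw [hb]
    have hexp : t ^ (2 * ((g i).1 * (g i).2)) ≤ t ^ ((g i).1 + (g i).2) := by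
      refine pow_le_pow_of_le_one ht0 ht1.le ?_
      have h1 : 1 ≤ (g i).1 := hg.1 i
      have h2 : 1 ≤ (g i).2 := hg.2.1 i
      nlinarith
    calc ((g i).2 : ℝ) ^ (s i - 1) * t ^ (2 * ((g i).1 * (g i).2))
        ≤ ((g i).2 : ℝ) ^ (s i - 1) * t ^ ((g i).1 + (g i).2) :=
          mul_le_mul_of_nonneg_left hexp (by positivity)
      _ = t ^ (g i).1 * (((g i).2 : ℝ) ^ (s i - 1) * t ^ (g i).2) := by
          rw [pow_add]; ring
  · rw [if_neg hg, norm_zero]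
    positivity

lemma stepA {l : ℕ} (s : Fin l → ℕ) {q : ℂ} (hq : ‖q‖ < 1) :
    ∑' n : ℕ, (msigma (fun i => s i - 1) n : ℂ) * q ^ n
      = ∑' g : Fin l → ℕ × ℕ, Fw s q g := by
  classical
  have hsum : Summable (Fw s q) := (summable_norm_Fw s hq).of_norm
  set G : ℕ → Finset (Fin l → ℕ × ℕ) := fun n =>
    (Fintype.piFinset fun _ : Fin l =>
      Finset.range (n + 1) ×ˢ Finset.range (n + 1)).filter
      (fun f => (∑ i, (f i).1 * (f i).2) = n ∧ (∀ i, 0 < (f i).1) ∧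
        (∀ i, 0 < (f i).2) ∧ ∀ i j : Fin l, i < j → (f j).1 < (f i).1) with hGdef
  have hmemsum : ∀ {n : ℕ} {x : Fin l → ℕ × ℕ}, x ∈ G n →
      (∑ i, (x i).1 * (x i).2) = n := by
    intro n x hx
    exact (Finset.mem_filter.mp hx).2.1
  have hmemgood : ∀ {n : ℕ} {x : Fin l → ℕ × ℕ}, x ∈ G n → goodTuple x := by
    intro n x hx
    obtain ⟨-, -, h1, h2, h3⟩ := Finset.mem_filter.mp hx
    exact ⟨h1, h2, h3⟩
  set emb : (Σ n : ℕ, {x // x ∈ G n}) → (Fin l → ℕ × ℕ) := fun p => p.2.1 with hembdef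
  have hinj : Function.Injective emb := by
    rintro ⟨n, x, hx⟩ ⟨n', x', hx'⟩ h
    obtain rfl : x = x' := h
    have : n = n' := by rw [← hmemsum hx, ← hmemsum hx']
    subst this
    rfl
  have hrange : Function.support (Fw s q) ⊆ Set.range emb := by
    intro g hg
    have hgood : goodTuple g := by
      by_contra h
      exact hg (by rw [Fw, if_neg h])
    have hgmem : g ∈ G (∑ i, (g i).1 * (g i).2) := by
      rw [hGdef]
      refine Finset.mem_filter.mpr ⟨?_, rfl, hgood.1, hgood.2.1, hgood.2.2⟩
      refine Fintype.mem_piFinset.mpr fun i => ?_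
      have hle : (g i).1 * (g i).2 ≤ ∑ j, (g j).1 * (g j).2 :=
        Finset.single_le_sum (f := fun j => (g j).1 * (g j).2)
          (fun j _ => Nat.zero_le _) (Finset.mem_univ i)
      have h1 : (g i).1 ≤ (g i).1 * (g i).2 := Nat.le_mul_of_pos_right _ (hgood.2.1 i)
      have h2 : (g i).2 ≤ (g i).1 * (g i).2 := Nat.le_mul_of_pos_left _ (hgood.1 i)
      refine Finset.mem_product.mpr ⟨?_, ?_⟩ <;> rw [Finset.mem_range] <;> omega
    exact ⟨⟨∑ i, (g i).1 * (g i).2, g, hgmem⟩, rfl⟩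
  rw [← Function.Injective.tsum_eq hinj hrange]
  rw [Summable.tsum_sigma' (f := fun p : (Σ n : ℕ, {x // x ∈ G n}) => Fw s q (emb p))
    (fun n => Summable.of_finite) (hsum.comp_injective hinj)]
  refine tsum_congr fun n => ?_
  have h1 : ∑' (c : {x // x ∈ G n}), Fw s q (emb ⟨n, c⟩) = ∑ x ∈ G n, Fw s q x :=
    Finset.tsum_subtype (G n) (Fw s q)
  rw [h1, msigma]
  push_cast
  rw [Finset.sum_mul]
  refine Finset.sum_congr rfl fun f hf => ?_
  rw [Fw, if_pos (hmemgood hf), hmemsum hf]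

lemma arrowProd_symm_apply {l : ℕ} (n d : Fin l → ℕ) :
    (Equiv.arrowProdEquivProdArrow (Fin l) (fun _ => ℕ) (fun _ => ℕ)).symm (n, d) = fun i => (n i, d i) := rfl

lemma stepB {l : ℕ} (s : Fin l → ℕ) (hs : ∀ i, 0 < s i) {q : ℂ}
    (hq : ‖q‖ < 1) :
    ∑' g : Fin l → ℕ × ℕ, Fw s q g
      = ∑' n : Fin l → ℕ,
          if (∀ i, 0 < n i) ∧ (∀ i j : Fin l, i < j → n j < n i) then
            ∏ i, q ^ n i * (Polynomial.aeval (q ^ n i) (eulerianPoly (s i - 1))) /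
              (1 - q ^ n i) ^ s i
          else 0 := by
  classical
  have hsum : Summable (Fw s q) := (summable_norm_Fw s hq).of_norm
  have hsum2 : Summable (fun p : (Fin l → ℕ) × (Fin l → ℕ) =>
      Fw s q ((Equiv.arrowProdEquivProdArrow (Fin l) (fun _ => ℕ) (fun _ => ℕ)).symm p)) :=
    (Equiv.arrowProdEquivProdArrow (Fin l) (fun _ => ℕ) (fun _ => ℕ)).symm.summable_iff.mpr hsum
  rw [← Equiv.tsum_eq (Equiv.arrowProdEquivProdArrow (Fin l) (fun _ => ℕ) (fun _ => ℕ)).symm (Fw s q)]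
  rw [Summable.tsum_prod' hsum2 hsum2.prod_factor]
  refine tsum_congr fun n => ?_
  by_cases hn : (∀ i, 0 < n i) ∧ (∀ i j : Fin l, i < j → n j < n i)
  · rw [if_pos hn]
    have hterm : ∀ d : Fin l → ℕ,
        Fw s q ((Equiv.arrowProdEquivProdArrow (Fin l) (fun _ => ℕ) (fun _ => ℕ)).symm (n, d))
          = if (∀ i, 0 < d i) then
              (∏ i, ((d i : ℂ)) ^ (s i - 1)) * q ^ (∑ i, n i * d i) else 0 := by
      intro d
      rw [arrowProd_symm_apply, Fw]
      by_cases hd : ∀ i, 0 < d i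
      · rw [if_pos ⟨fun i => hn.1 i, hd, fun i j hij => hn.2 i j hij⟩, if_pos hd]
      · rw [if_neg (fun hgood => hd hgood.2.1), if_neg hd]
    rw [tsum_congr hterm]
    have hfg : ∀ e : Fin l → ℕ,
        ∏ i, (((e i : ℂ) + 1) ^ (s i - 1) * (q ^ n i) ^ (e i + 1))
          = (∏ i, (((e i + 1 : ℕ)) : ℂ) ^ (s i - 1)) * q ^ (∑ i, n i * (e i + 1)) := by
      intro e
      rw [Finset.prod_mul_distrib]
      congr 1
      · exact Finset.prod_congr rfl fun i _ => by push_cast; ring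
      · simp_rw [← pow_mul]
        rw [Finset.prod_pow_eq_pow_sum]
    have hshift : (∑' d : Fin l → ℕ, if (∀ i, 0 < d i) then
          (∏ i, ((d i : ℂ)) ^ (s i - 1)) * q ^ (∑ i, n i * d i) else 0)
        = ∑' d : Fin l → ℕ,
            ∏ i, (((d i : ℂ) + 1) ^ (s i - 1) * (q ^ n i) ^ (d i + 1)) := by
      refine tsum_eq_tsum_of_ne_zero_bij
        (i := fun x => fun j => x.1 j + 1) ?_ ?_ ?_
      · rintro ⟨x, hx⟩ ⟨y, hy⟩ h
        have hxy : x = y := funext fun j => by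
          have h2 := congrFun h j
          simp only [] at h2
          omega
        exact Subtype.ext hxy
      · intro d hd
        have hdpos : ∀ i, 0 < d i := by
          by_contra h
          exact hd (if_neg h)
        have he : ∀ j : Fin l, d j - 1 + 1 = d j := fun j => by
          have := hdpos j; omega
        have hmem : (fun j => d j - 1) ∈ Function.support
            (fun e : Fin l → ℕ =>
              ∏ i, (((e i : ℂ) + 1) ^ (s i - 1) * (q ^ n i) ^ (e i + 1))) := by
          simp only [Function.mem_support]
          rw [hfg]
          simp_rw [he]
          simp only [Function.mem_support, if_pos hdpos] at hd
          exact hd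
        exact ⟨⟨fun j => d j - 1, hmem⟩, funext fun j => he j⟩
      · rintro ⟨x, hx⟩
        rw [if_pos (fun i => Nat.succ_pos (x i))]
        exact (hfg x).symm
    rw [hshift]
    have hzi : ∀ i : Fin l, ‖q ^ n i‖ < 1 := by
      intro i
      rw [norm_pow]
      exact pow_lt_one₀ (norm_nonneg q) hq (hn.1 i).ne'
    rw [tsum_pi_prod (fun (i : Fin l) (m : ℕ) => ((m : ℂ) + 1) ^ (s i - 1) * (q ^ n i) ^ (m + 1))
      (fun i => ?_)]
    · refine Finset.prod_congr rfl fun i _ => ?_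
      rw [eulerian_gen (s i - 1) (hzi i), Nat.sub_add_cancel (hs i)]
    · have hbase := summable_norm_pow_mul_geom (s i - 1) (hzi i)
      refine ((summable_nat_add_iff 1).mpr hbase).congr fun m => ?_
      norm_cast
  · rw [if_neg hn]
    have : ∀ d : Fin l → ℕ,
        Fw s q ((Equiv.arrowProdEquivProdArrow (Fin l) (fun _ => ℕ) (fun _ => ℕ)).symm (n, d)) = 0 := by
      intro d
      rw [arrowProd_symm_apply, Fw, if_neg]
      intro hgood
      exact hn ⟨fun i => hgood.1 i, fun i j hij => hgood.2.2 i j hij⟩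
    simp only [this, tsum_zero]


theorem bracket_eq_sum_eulerian {l : ℕ} (s : Fin l → ℕ) (hs : ∀ i, 0 < s i)
    (q : ℂ) (hq : ‖q‖ < 1) :
    bracketFn s q =
      (∏ i, ((s i - 1).factorial : ℂ))⁻¹ *
        ∑' n : Fin l → ℕ,
          if (∀ i, 0 < n i) ∧ (∀ i j : Fin l, i < j → n j < n i) then
            ∏ i, q ^ n i * (Polynomial.aeval (q ^ n i) (eulerianPoly (s i - 1))) /
              (1 - q ^ n i) ^ s i
          else 0 := by
  rw [bracketFn]
  congr 1
  rw [stepA s hq, stepB s hs hq]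
end

section
/- For positive integers a, b and |z| < 1, the normalized polylogarithms L̃_{1-s}(z) = (1/(s-1)!) Σ_{n>0} n^{s-1} z^n satisfy L̃_{1-a}(z)·L̃_{1-b}(z) = Σ_{j=1}^a λ^j_{a,b} L̃_{1-j}(z) + Σ_{j=1}^b λ^j_{b,a} L̃_{1-j}(z) + L̃_{1-(a+b)}(z), where λ^j_{a,b} = (-1)^{b-1} C(a+b-j-1, a-j) B_{a+b-j}/(a+b-j)! and B_n are the Bernoulli numbers. -/
/-- The coefficient `λ^j_{a,b} = (-1)^{b-1} C(a+b-j-1, a-j) B_{a+b-j}/(a+b-j)!`,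
where `B_n` are the Bernoulli numbers (with `B_1 = -1/2`). -/
def lam (j a b : ℕ) : ℚ :=
  (-1 : ℚ) ^ (b - 1) * ((a + b - j - 1).choose (a - j)) * bernoulli (a + b - j) /
    (a + b - j).factorial

/-- The normalized polylogarithm `L̃_{1-s}` as a formal power series:
`L̃_{1-s}(z) = (1/(s-1)!) Σ_{n>0} n^{s-1} z^n`. -/
noncomputable def polyLogTilde (s : ℕ) : PowerSeries ℚ :=
  PowerSeries.mk fun n => if n = 0 then 0 else (n : ℚ) ^ (s - 1) / (s - 1).factorial


open Finset

def pcoef (s m : ℕ) : ℚ := if m = 0 then 0 else (m : ℚ) ^ (s - 1) / (s - 1).factorial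

/-- Alternating-sign binomial convolution: `∑_l (-1)^l C(q,l) C(r+l,m)`. -/
lemma sumV (m : ℕ) : ∀ (q r : ℕ),
    ∑ l ∈ range (q+1), (-1:ℚ)^l * (q.choose l) * ((r+l).choose m)
      = (-1)^q * (if q ≤ m then ((r.choose (m-q)) : ℚ) else 0) := by
  intro q
  induction q with
  | zero => intro r; simp
  | succ q ih =>
    intro r
    have hstep : ∑ l ∈ range (q+1+1), (-1:ℚ)^l * ((q+1).choose l) * ((r+l).choose m)
        = (∑ l ∈ range (q+1), (-1:ℚ)^l * (q.choose l) * ((r+l).choose m))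
          - ∑ l ∈ range (q+1), (-1:ℚ)^l * (q.choose l) * (((r+1)+l).choose m) := by
      rw [Finset.sum_range_succ' (fun l => (-1:ℚ)^l * ((q+1).choose l) * ((r+l).choose m)) (q+1)]
      have h1 : ∀ l ∈ range (q+1),
          (-1:ℚ)^(l+1) * ((q+1).choose (l+1)) * ((r+(l+1)).choose m)
            = ((-1:ℚ)^(l+1) * (q.choose (l+1)) * ((r+(l+1)).choose m))
              + (-((-1:ℚ)^l * (q.choose l) * (((r+1)+l).choose m))) := by
        intro l _
        rw [Nat.choose_succ_succ' q l]
        have : r + (l+1) = (r+1) + l := by omega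
        rw [this]
        push_cast
        ring
      rw [Finset.sum_congr rfl h1, Finset.sum_add_distrib, Finset.sum_neg_distrib]
      have h2 : (∑ l ∈ range (q+1), (-1:ℚ)^(l+1) * (q.choose (l+1)) * ((r+(l+1)).choose m))
            + (-1:ℚ)^0 * ((q+1).choose 0) * ((r+0).choose m)
          = ∑ l ∈ range (q+1+1), (-1:ℚ)^l * (q.choose l) * ((r+l).choose m) := by
        rw [Finset.sum_range_succ' (fun l => (-1:ℚ)^l * (q.choose l) * ((r+l).choose m)) (q+1)]
        simp
      have h3 : ∑ l ∈ range (q+1+1), (-1:ℚ)^l * (q.choose l) * ((r+l).choose m)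
          = ∑ l ∈ range (q+1), (-1:ℚ)^l * (q.choose l) * ((r+l).choose m) := by
        rw [Finset.sum_range_succ]
        simp [Nat.choose_succ_self]
      calc _ = (∑ l ∈ range (q+1), (-1:ℚ)^(l+1) * (q.choose (l+1)) * ((r+(l+1)).choose m))
                + (-1:ℚ)^0 * ((q+1).choose 0) * ((r+0).choose m)
                - ∑ l ∈ range (q+1), (-1:ℚ)^l * (q.choose l) * (((r+1)+l).choose m) := by
              ring
        _ = _ := by rw [h2, h3]
    rw [hstep, ih r, ih (r+1)]
    rcases lt_trichotomy m q with h | h | h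
    · rw [if_neg (by omega), if_neg (by omega), if_neg (by omega)]; ring
    · subst h
      rw [if_pos le_rfl, if_pos le_rfl, if_neg (by omega)]
      simp [Nat.sub_self]
    · have hq : q ≤ m := by omega
      have hq1 : q + 1 ≤ m := by omega
      rw [if_pos hq, if_pos hq, if_pos hq1]
      have hm : m - q = (m - (q+1)) + 1 := by omega
      rw [hm, Nat.choose_succ_succ' r (m - (q+1))]
      push_cast
      ring

/-- Beta-integral-like identity: `∑_l (-1)^l C(q,l)/(r+l) = q! (r-1)! / (r+q)!`. -/
lemma sumA : ∀ (q r : ℕ), 1 ≤ r →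
    ∑ l ∈ range (q+1), (-1:ℚ)^l * (q.choose l) / (r+l)
      = (q.factorial : ℚ) * (r-1).factorial / (r+q).factorial := by
  intro q
  induction q with
  | zero =>
    intro r hr
    have hr0 : (0:ℚ) < r := by exact_mod_cast hr
    have h : ((r:ℚ)) * (r-1).factorial = r.factorial := by
      rw_mod_cast [Nat.mul_factorial_pred (Nat.one_le_iff_ne_zero.mp hr)]
    have hf : ((r-1).factorial : ℚ) ≠ 0 := Nat.cast_ne_zero.mpr (Nat.factorial_ne_zero _)
    rw [Finset.sum_range_one]
    simp only [pow_zero, Nat.choose_zero_right, Nat.cast_one, Nat.cast_zero, add_zero, one_mul,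
      Nat.factorial_zero, Nat.add_zero]
    rw [← h]
    field_simp
  | succ q ih =>
    intro r hr
    have hstep : ∑ l ∈ range (q+1+1), (-1:ℚ)^l * ((q+1).choose l) / (r+l)
        = (∑ l ∈ range (q+1), (-1:ℚ)^l * (q.choose l) / (r+l))
          - ∑ l ∈ range (q+1), (-1:ℚ)^l * (q.choose l) / ((r:ℚ)+1+l) := by
      rw [Finset.sum_range_succ' (fun l => (-1:ℚ)^l * ((q+1).choose l) / (r+l)) (q+1)]
      have h1 : ∀ l ∈ range (q+1),
          (-1:ℚ)^(l+1) * ((q+1).choose (l+1)) / ((r:ℚ)+(l+1))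
            = ((-1:ℚ)^(l+1) * (q.choose (l+1)) / ((r:ℚ)+(l+1)))
              + (-((-1:ℚ)^l * (q.choose l) / ((r:ℚ)+1+l))) := by
        intro l _
        rw [Nat.choose_succ_succ' q l]
        have h2 : ((r:ℚ) + (l+1)) = ((r:ℚ)+1) + l := by ring
        rw [h2]
        push_cast
        ring
      push_cast
      rw [Finset.sum_congr rfl h1, Finset.sum_add_distrib, Finset.sum_neg_distrib]
      have h2 : (∑ l ∈ range (q+1), (-1:ℚ)^(l+1) * (q.choose (l+1)) / ((r:ℚ)+(l+1)))
            + (-1:ℚ)^0 * (q.choose 0) / ((r:ℚ)+0)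
          = ∑ l ∈ range (q+1+1), (-1:ℚ)^l * (q.choose l) / ((r:ℚ)+l) := by
        rw [Finset.sum_range_succ' (fun l => (-1:ℚ)^l * (q.choose l) / ((r:ℚ)+l)) (q+1)]
        push_cast
        ring
      have h3 : ∑ l ∈ range (q+1+1), (-1:ℚ)^l * (q.choose l) / ((r:ℚ)+l)
          = ∑ l ∈ range (q+1), (-1:ℚ)^l * (q.choose l) / ((r:ℚ)+l) := by
        rw [Finset.sum_range_succ]
        simp [Nat.choose_succ_self]
      rw [← h3, ← h2]
      simp only [Nat.choose_zero_right, Nat.cast_one, pow_zero]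
      push_cast
      ring
    have hr1 : (1:ℕ) ≤ r + 1 := by omega
    have ih1 := ih (r+1) hr1
    have e1 : r + 1 - 1 = r := by omega
    rw [e1] at ih1
    push_cast at ih1
    rw [hstep, ih r hr, ih1]
    have hfq : ((r+q).factorial : ℚ) ≠ 0 := Nat.cast_ne_zero.mpr (Nat.factorial_ne_zero _)
    have e2 : r + 1 + q = r + q + 1 := by omega
    have e3 : r + (q+1) = r + q + 1 := by omega
    rw [e2] at ih1 ⊢
    rw [e3]
    have hfs : ((r+q+1).factorial : ℚ) = (r+q+1) * (r+q).factorial := by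
      rw [Nat.factorial_succ]; push_cast; ring
    have hrf : (r.factorial : ℚ) = r * (r-1).factorial := by
      rw_mod_cast [Nat.mul_factorial_pred (Nat.one_le_iff_ne_zero.mp hr)]
    have hqf : ((q+1).factorial : ℚ) = (q+1) * q.factorial := by
      rw [Nat.factorial_succ]; push_cast; ring
    rw [hfs, hrf, hqf]
    have hfs0 : ((r+q+1:ℚ)) ≠ 0 := by positivity
    field_simp
    ring

/-- `(a-1)!(b-1)! C(a+b-j-1, a-j) / ((a+b-j)! (j-1)!) = C(a-1,a-j)/(a+b-j)`. -/
lemma fact_id (a b j : ℕ) (ha : 1 ≤ a) (hb : 1 ≤ b) (hj : 1 ≤ j) (hja : j ≤ a) :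
    ((a-1).factorial : ℚ) * (b-1).factorial * ((a+b-j-1).choose (a-j))
        / ((a+b-j).factorial * (j-1).factorial)
      = ((a-1).choose (a-j) : ℚ) / (a+b-j) := by
  have h1 : a - j ≤ a + b - j - 1 := by omega
  have h2 : a - j ≤ a - 1 := by omega
  rw [Nat.cast_choose ℚ h1, Nat.cast_choose ℚ h2]
  have e1 : a + b - j - 1 - (a - j) = b - 1 := by omega
  have e2 : a - 1 - (a - j) = j - 1 := by omega
  rw [e1, e2]
  have hs : 0 < a + b - j := by omega
  have hfs : ((a+b-j).factorial : ℚ) = ((a:ℚ)+b-j) * (a+b-j-1).factorial := by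
    have h3 : ((a+b-j : ℕ) : ℚ) = (a:ℚ)+b-j := by
      rw [Nat.cast_sub (by omega)]; push_cast; ring
    rw [← h3]
    exact_mod_cast (Nat.mul_factorial_pred hs.ne').symm
  rw [hfs]
  have n0 : ∀ m : ℕ, ((m.factorial : ℚ)) ≠ 0 := fun m => Nat.cast_ne_zero.mpr (Nat.factorial_ne_zero m)
  have hs0 : ((a:ℚ)+b-j) ≠ 0 := by
    have h3 : ((a+b-j : ℕ) : ℚ) = (a:ℚ)+b-j := by
      rw [Nat.cast_sub (by omega)]; push_cast; ring
    rw [← h3]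
    exact_mod_cast hs.ne'
  field_simp

/-- Parity/Bernoulli cancellation. -/
lemma key_par (a b j : ℕ) (ha : 1 ≤ a) (hj : 1 ≤ j) (hjb : j ≤ b) :
    (-1:ℚ)^(a-1) * ((b-1).choose (b-j)) * bernoulli (a+b-j) / (a+b-j)
      + (-1:ℚ)^(b-j) * ((b-1).choose (j-1)) * bernoulli (a+b-j) / (a+b-j)
      + (if a = 1 ∧ j = b then 1 else 0) = 0 := by
  have hc : (b-1).choose (b-j) = (b-1).choose (j-1) := by
    rw [← Nat.choose_symm (by omega : b - j ≤ b - 1)]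
    congr 1
    omega
  rw [hc]
  by_cases hpar : (a-1) % 2 = (b-j) % 2
  · have hsign : (-1:ℚ)^(a-1) = (-1:ℚ)^(b-j) := by
      rw [neg_one_pow_eq_pow_mod_two, hpar, ← neg_one_pow_eq_pow_mod_two]
    rw [hsign]
    by_cases hs1 : a + b - j = 1
    · have ha1 : a = 1 ∧ j = b := by omega
      have hbj : b - j = 0 := by omega
      rw [if_pos ha1, hs1, hbj]
      have e4 : b - 1 = j - 1 := by omega
      rw [e4]
      obtain ⟨ha1', hjb'⟩ := ha1
      subst ha1'; subst hjb'
      simp [bernoulli_one]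
    · have hodd : Odd (a+b-j) := by
        rcases Nat.even_or_odd (a+b-j) with he | ho
        · exfalso
          rcases he with ⟨c, hcc⟩
          omega
        · exact ho
      have hgt : 1 < a + b - j := by
        have : 1 ≤ a + b - j := by omega
        omega
      have hzero : bernoulli (a+b-j) = 0 := by
        rw [bernoulli_eq_bernoulli'_of_ne_one (by omega)]
        exact bernoulli'_eq_zero_of_odd hodd hgt
      rw [hzero, if_neg (by omega)]
      ring
  · have hsign : (-1:ℚ)^(a-1) = -(-1:ℚ)^(b-j) := by
      rw [neg_one_pow_eq_pow_mod_two, neg_one_pow_eq_pow_mod_two (n := b-j)]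
      have h1 : (a-1) % 2 = 1 - (b-j) % 2 := by omega
      rcases Nat.mod_two_eq_zero_or_one (b-j) with h | h <;> simp [h1, h] <;> norm_num
    rw [hsign, if_neg (by omega)]
    ring

lemma choose_ratio (e i : ℕ) : (((e+1).choose (i+1) : ℕ) : ℚ) / ((e:ℚ)+1) = ((e.choose i : ℕ) : ℚ) / ((i:ℚ)+1) := by
  have h := Nat.add_one_mul_choose_eq e i
  have h' : ((e:ℚ)+1) * (e.choose i) = (((e+1).choose (i+1) : ℕ) : ℚ) * ((i:ℚ)+1) := by
    exact_mod_cast h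
  rw [div_eq_div_iff (by positivity) (by positivity)]
  linarith [h']

section keyP
variable (a b n : ℕ)

lemma keyP (ha : 1 ≤ a) (hb : 1 ≤ b) :
    ∑ m ∈ range n, (m:ℚ)^(a-1) * ((n:ℚ) - m)^(b-1)
      = (n:ℚ)^(a+b-1) * ((a-1).factorial * (b-1).factorial) / (a+b-1).factorial
        + (∑ i ∈ range (a+b-1), (if b-1 ≤ i then (((a-1).choose (i+1-b) : ℕ) : ℚ) else 0)
            * (-1)^(b-1) * bernoulli (i+1) * (n:ℚ)^(a+b-2-i) / ((i:ℚ)+1))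
        - ∑ k ∈ range b, (-1:ℚ)^(b-1-k) * ((b-1).choose k) * bernoulli (a+b-1-k)
            * (n:ℚ)^k / ((a+b-1-k : ℕ) : ℚ) := by
  -- Step 1: binomial expansion and swap
  have step1 : ∑ m ∈ range n, (m:ℚ)^(a-1) * ((n:ℚ) - m)^(b-1)
      = ∑ k ∈ range b, (-1:ℚ)^(b-1-k) * ((b-1).choose k) * (n:ℚ)^k
          * ∑ m ∈ range n, (m:ℚ)^(a+b-2-k) := by
    have expand : ∀ m ∈ range n, (m:ℚ)^(a-1) * ((n:ℚ) - m)^(b-1)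
        = ∑ k ∈ range b, (-1:ℚ)^(b-1-k) * ((b-1).choose k) * (n:ℚ)^k * (m:ℚ)^(a+b-2-k) := by
      intro m hm
      rw [sub_pow]
      have hb1 : b - 1 + 1 = b := by omega
      rw [hb1, Finset.mul_sum]
      refine Finset.sum_congr rfl fun k hk => ?_
      have hk' : k < b := mem_range.mp hk
      have he : a + b - 2 - k = (a-1) + (b-1-k) := by omega
      have hsgn : (-1:ℚ)^(k+(b-1)) = (-1)^(b-1-k) := by
        rw [neg_one_pow_eq_pow_mod_two, neg_one_pow_eq_pow_mod_two (n := b-1-k)]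
        congr 1
        omega
      rw [hsgn, he, pow_add]
      ring
    rw [Finset.sum_congr rfl expand, Finset.sum_comm]
    refine Finset.sum_congr rfl fun k _ => ?_
    rw [Finset.mul_sum]
  rw [step1]
  -- Step 2: Faulhaber + split off i = 0 + choose ratio
  have step2 : ∀ k ∈ range b,
      ∑ m ∈ range n, (m:ℚ)^(a+b-2-k)
        = (∑ i ∈ range (a+b-2-k), bernoulli (i+1) * ((a+b-2-k).choose i) * (n:ℚ)^(a+b-2-k-i) / ((i:ℚ)+1))
          + (n:ℚ)^(a+b-1-k) / ((a+b-1-k : ℕ) : ℚ) := by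
    intro k hk
    have hk' : k < b := mem_range.mp hk
    rw [_root_.sum_range_pow n (a+b-2-k)]
    rw [Finset.sum_range_succ' (fun i => bernoulli i * (((a+b-2-k)+1).choose i) * (n:ℚ)^((a+b-2-k)+1-i) / (((a+b-2-k:ℕ):ℚ)+1)) (a+b-2-k)]
    congr 1
    · refine Finset.sum_congr rfl fun i hi => ?_
      have hi' : i < a+b-2-k := mem_range.mp hi
      have hcr := choose_ratio (a+b-2-k) i
      have e1 : a+b-2-k+1-(i+1) = a+b-2-k-i := by omega
      rw [e1]
      rw [div_eq_div_iff (by positivity) (by positivity)] at hcr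
      rw [div_eq_div_iff (by positivity) (by positivity)]
      linear_combination (bernoulli (i+1) * (n:ℚ)^(a+b-2-k-i)) * hcr
    · have e2 : a+b-2-k+1-0 = a+b-1-k := by omega
      have e3 : ((a+b-1-k : ℕ) : ℚ) = ((a+b-2-k : ℕ) : ℚ) + 1 := by
        have : a+b-1-k = (a+b-2-k) + 1 := by omega
        rw [this]
        push_cast
        ring
      rw [e2, e3]
      simp
  rw [Finset.sum_congr rfl (fun k hk => by rw [step2 k hk])]
  -- distribute
  have step3 : ∑ k ∈ range b, (-1:ℚ)^(b-1-k) * ((b-1).choose k) * (n:ℚ)^k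
        * ((∑ i ∈ range (a+b-2-k), bernoulli (i+1) * ((a+b-2-k).choose i) * (n:ℚ)^(a+b-2-k-i) / ((i:ℚ)+1))
            + (n:ℚ)^(a+b-1-k) / ((a+b-1-k : ℕ) : ℚ))
      = (∑ k ∈ range b, ∑ i ∈ range (a+b-2-k),
            (-1:ℚ)^(b-1-k) * ((b-1).choose k) * ((a+b-2-k).choose i) * bernoulli (i+1) * (n:ℚ)^(a+b-2-i) / ((i:ℚ)+1))
        + ∑ k ∈ range b, (-1:ℚ)^(b-1-k) * ((b-1).choose k) * (n:ℚ)^(a+b-1) / ((a+b-1-k : ℕ) : ℚ) := by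
    rw [← Finset.sum_add_distrib]
    refine Finset.sum_congr rfl fun k hk => ?_
    have hk' : k < b := mem_range.mp hk
    rw [mul_add]
    congr 1
    · rw [Finset.mul_sum]
      refine Finset.sum_congr rfl fun i hi => ?_
      have hi' : i < a+b-2-k := mem_range.mp hi
      have e4 : (n:ℚ)^k * (n:ℚ)^(a+b-2-k-i) = (n:ℚ)^(a+b-2-i) := by
        rw [← pow_add]
        congr 1
        omega
      calc (-1:ℚ)^(b-1-k) * ((b-1).choose k) * (n:ℚ)^k
            * (bernoulli (i+1) * ((a+b-2-k).choose i) * (n:ℚ)^(a+b-2-k-i) / ((i:ℚ)+1))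
          = (-1:ℚ)^(b-1-k) * ((b-1).choose k) * ((a+b-2-k).choose i) * bernoulli (i+1)
              * ((n:ℚ)^k * (n:ℚ)^(a+b-2-k-i)) / ((i:ℚ)+1) := by ring
        _ = _ := by rw [e4]
    · have e5 : (n:ℚ)^k * (n:ℚ)^(a+b-1-k) = (n:ℚ)^(a+b-1) := by
        rw [← pow_add]
        congr 1
        omega
      calc (-1:ℚ)^(b-1-k) * ((b-1).choose k) * (n:ℚ)^k * ((n:ℚ)^(a+b-1-k) / ((a+b-1-k : ℕ) : ℚ))
          = (-1:ℚ)^(b-1-k) * ((b-1).choose k) * ((n:ℚ)^k * (n:ℚ)^(a+b-1-k)) / ((a+b-1-k : ℕ) : ℚ) := by ring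
        _ = _ := by rw [e5]
  rw [step3]
  -- stepA : the i = 0 part gives the top term via the Beta identity
  have stepA : ∑ k ∈ range b, (-1:ℚ)^(b-1-k) * ((b-1).choose k) * (n:ℚ)^(a+b-1) / ((a+b-1-k : ℕ) : ℚ)
      = (n:ℚ)^(a+b-1) * ((a-1).factorial * (b-1).factorial) / (a+b-1).factorial := by
    have h1 : ∀ k ∈ range b, (-1:ℚ)^(b-1-k) * ((b-1).choose k) * (n:ℚ)^(a+b-1) / ((a+b-1-k : ℕ) : ℚ)
        = (n:ℚ)^(a+b-1) * ((fun l => (-1:ℚ)^l * (((b-1).choose l : ℕ) : ℚ) / ((a:ℚ) + l)) (b-1-k)) := by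
      intro k hk
      have hk' : k < b := mem_range.mp hk
      simp only
      have e1 : (b-1).choose (b-1-k) = (b-1).choose k := Nat.choose_symm (by omega)
      have e2 : ((a:ℚ) + ((b-1-k : ℕ) : ℚ)) = ((a+b-1-k : ℕ) : ℚ) := by
        have e2' : a + (b-1-k) = a+b-1-k := by omega
        rw [← e2']
        push_cast
        ring
      rw [e1, e2]
      ring
    rw [Finset.sum_congr rfl h1, ← Finset.mul_sum,
      Finset.sum_range_reflect (fun l => (-1:ℚ)^l * (((b-1).choose l : ℕ) : ℚ) / ((a:ℚ) + l)) b]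
    have hA := sumA (b-1) a ha
    rw [show b-1+1 = b by omega] at hA
    rw [hA]
    rw [show a + (b-1) = a+b-1 by omega, show a - 1 = a-1 by rfl]
    ring
  -- stepB : extend the inner range, producing the correction terms
  have stepB : ∀ k ∈ range b,
      ∑ i ∈ range (a+b-2-k),
          (-1:ℚ)^(b-1-k) * ((b-1).choose k) * ((a+b-2-k).choose i) * bernoulli (i+1)
            * (n:ℚ)^(a+b-2-i) / ((i:ℚ)+1)
        = (∑ i ∈ range (a+b-1),
            (-1:ℚ)^(b-1-k) * ((b-1).choose k) * ((a+b-2-k).choose i) * bernoulli (i+1)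
              * (n:ℚ)^(a+b-2-i) / ((i:ℚ)+1))
          - (-1:ℚ)^(b-1-k) * ((b-1).choose k) * bernoulli (a+b-1-k) * (n:ℚ)^k / ((a+b-1-k : ℕ) : ℚ) := by
    intro k hk
    have hk' : k < b := mem_range.mp hk
    have hsub : range (a+b-2-k+1) ⊆ range (a+b-1) := by
      apply range_subset_range.mpr
      omega
    have hzero : ∀ i ∈ range (a+b-1), i ∉ range (a+b-2-k+1) →
        (-1:ℚ)^(b-1-k) * ((b-1).choose k) * ((a+b-2-k).choose i) * bernoulli (i+1)
          * (n:ℚ)^(a+b-2-i) / ((i:ℚ)+1) = 0 := by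
      intro i _ hi
      have hlt : a+b-2-k < i := by
        simp only [mem_range] at hi
        omega
      rw [Nat.choose_eq_zero_of_lt hlt]
      simp
    rw [← Finset.sum_subset hsub hzero, Finset.sum_range_succ]
    have hW : (-1:ℚ)^(b-1-k) * ((b-1).choose k) * ((a+b-2-k).choose (a+b-2-k)) * bernoulli ((a+b-2-k)+1)
          * (n:ℚ)^(a+b-2-(a+b-2-k)) / ((((a+b-2-k):ℕ):ℚ)+1)
        = (-1:ℚ)^(b-1-k) * ((b-1).choose k) * bernoulli (a+b-1-k) * (n:ℚ)^k / ((a+b-1-k : ℕ) : ℚ) := by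
      rw [Nat.choose_self, show (a+b-2-k)+1 = a+b-1-k by omega, show a+b-2-(a+b-2-k) = k by omega]
      have e3 : ((a+b-1-k : ℕ) : ℚ) = ((a+b-2-k : ℕ) : ℚ) + 1 := by
        rw [show a+b-1-k = (a+b-2-k)+1 by omega]
        push_cast
        ring
      rw [e3]
      push_cast
      ring
    rw [hW]
    ring
  rw [Finset.sum_congr rfl stepB, Finset.sum_sub_distrib]
  -- stepC : swap sums and apply the binomial convolution identity
  have stepC : ∑ k ∈ range b, ∑ i ∈ range (a+b-1),
        (-1:ℚ)^(b-1-k) * ((b-1).choose k) * ((a+b-2-k).choose i) * bernoulli (i+1)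
          * (n:ℚ)^(a+b-2-i) / ((i:ℚ)+1)
      = ∑ i ∈ range (a+b-1), (if b-1 ≤ i then (((a-1).choose (i+1-b) : ℕ) : ℚ) else 0)
          * (-1)^(b-1) * bernoulli (i+1) * (n:ℚ)^(a+b-2-i) / ((i:ℚ)+1) := by
    rw [Finset.sum_comm]
    refine Finset.sum_congr rfl fun i hi => ?_
    have h1 : ∀ k ∈ range b,
        (-1:ℚ)^(b-1-k) * ((b-1).choose k) * ((a+b-2-k).choose i) * bernoulli (i+1)
          * (n:ℚ)^(a+b-2-i) / ((i:ℚ)+1)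
        = (bernoulli (i+1) * (n:ℚ)^(a+b-2-i) / ((i:ℚ)+1))
            * ((fun l => (-1:ℚ)^l * (((b-1).choose l : ℕ) : ℚ) * ((((a-1)+l).choose i : ℕ) : ℚ)) (b-1-k)) := by
      intro k hk
      have hk' : k < b := mem_range.mp hk
      simp only
      have e1 : (b-1).choose (b-1-k) = (b-1).choose k := Nat.choose_symm (by omega)
      have e2 : (a-1)+(b-1-k) = a+b-2-k := by omega
      rw [e1, e2]
      ring
    rw [Finset.sum_congr rfl h1, ← Finset.mul_sum,
      Finset.sum_range_reflect (fun l => (-1:ℚ)^l * (((b-1).choose l : ℕ) : ℚ) * ((((a-1)+l).choose i : ℕ) : ℚ)) b]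
    have hV := sumV i (b-1) (a-1)
    rw [show b-1+1 = b by omega] at hV
    rw [hV]
    by_cases hbi : b-1 ≤ i
    · rw [if_pos hbi, if_pos hbi, show i - (b-1) = i+1-b by omega]
      ring
    · rw [if_neg hbi, if_neg hbi]
      ring
  rw [stepC, stepA]
  ring

end keyP
lemma stepL (a b n : ℕ) (ha : 1 ≤ a) (hb : 1 ≤ b) (hn : 1 ≤ n) :
    ((a-1).factorial * (b-1).factorial : ℚ) * ∑ m ∈ range (n+1), pcoef a m * pcoef b (n-m)
      = (∑ m ∈ range n, (m:ℚ)^(a-1) * ((n:ℚ) - m)^(b-1)) - (0:ℚ)^(a-1) * (n:ℚ)^(b-1) := by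
  rw [Finset.sum_range_succ]
  have h0 : pcoef a n * pcoef b (n - n) = 0 := by simp [pcoef]
  rw [h0, add_zero]
  have key : ∀ m ∈ range n, (m:ℚ)^(a-1) * ((n:ℚ) - m)^(b-1)
      = ((a-1).factorial * (b-1).factorial : ℚ) * (pcoef a m * pcoef b (n-m))
        + (if m = 0 then (0:ℚ)^(a-1) * (n:ℚ)^(b-1) else 0) := by
    intro m hm
    have hm' : m < n := mem_range.mp hm
    by_cases h : m = 0
    · subst h
      simp [pcoef]
    · rw [if_neg h, add_zero]
      have hnm : n - m ≠ 0 := by omega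
      rw [pcoef, pcoef, if_neg h, if_neg hnm]
      have hc : ((n - m : ℕ) : ℚ) = (n:ℚ) - m := by
        rw [Nat.cast_sub (by omega)]
      rw [hc]
      have f1 : ((a-1).factorial : ℚ) ≠ 0 := Nat.cast_ne_zero.mpr (Nat.factorial_ne_zero _)
      have f2 : ((b-1).factorial : ℚ) ≠ 0 := Nat.cast_ne_zero.mpr (Nat.factorial_ne_zero _)
      field_simp
  rw [Finset.sum_congr rfl key, Finset.sum_add_distrib, Finset.sum_ite_eq' (range n) 0
    (fun _ => (0:ℚ)^(a-1) * (n:ℚ)^(b-1))]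
  rw [if_pos (mem_range.mpr (by omega)), Finset.mul_sum]
  ring

lemma stepR1 (a b n : ℕ) (ha : 1 ≤ a) (hb : 1 ≤ b) (hn : 1 ≤ n) :
    ((a-1).factorial * (b-1).factorial : ℚ) * ∑ j ∈ Icc 1 a, lam j a b * pcoef j n
      = ∑ i ∈ range (a+b-1), (if b-1 ≤ i then (((a-1).choose (i+1-b) : ℕ) : ℚ) else 0)
          * (-1)^(b-1) * bernoulli (i+1) * (n:ℚ)^(a+b-2-i) / ((i:ℚ)+1) := by
  have hsplit : ∀ i ∈ range (a+b-1),
      (if b-1 ≤ i then (((a-1).choose (i+1-b) : ℕ) : ℚ) else 0)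
          * (-1)^(b-1) * bernoulli (i+1) * (n:ℚ)^(a+b-2-i) / ((i:ℚ)+1)
        = if b-1 ≤ i then (((a-1).choose (i+1-b) : ℕ) : ℚ)
            * (-1)^(b-1) * bernoulli (i+1) * (n:ℚ)^(a+b-2-i) / ((i:ℚ)+1) else 0 := by
    intro i _
    by_cases h : b-1 ≤ i
    · rw [if_pos h, if_pos h]
    · rw [if_neg h, if_neg h]
      ring
  rw [Finset.sum_congr rfl hsplit, ← Finset.sum_filter, Finset.mul_sum]
  refine Finset.sum_nbij' (fun j => a+b-1-j) (fun i => a+b-1-i) ?_ ?_ ?_ ?_ ?_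
  · intro j hj
    simp only [mem_Icc] at hj
    simp only [mem_filter, mem_range]
    omega
  · intro i hi
    simp only [mem_filter, mem_range] at hi
    simp only [mem_Icc]
    omega
  · intro j hj
    simp only [mem_Icc] at hj
    omega
  · intro i hi
    simp only [mem_filter, mem_range] at hi
    omega
  · intro j hj
    simp only [mem_Icc] at hj
    obtain ⟨hj1, hja⟩ := hj
    have e1 : a+b-1-j+1-b = a-j := by omega
    have e2 : (a+b-1-j)+1 = a+b-j := by omega
    have e3 : a+b-2-(a+b-1-j) = j-1 := by omega
    have e4 : ((a+b-1-j : ℕ) : ℚ) + 1 = (a:ℚ)+b-j := by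
      rw [Nat.cast_sub (by omega : j ≤ a+b-1), Nat.cast_sub (by omega : 1 ≤ a+b)]
      push_cast
      ring
    rw [e1, e2, e3, e4]
    have hf := fact_id a b j ha hb hj1 hja
    have hn0 : n ≠ 0 := by omega
    rw [lam, pcoef, if_neg hn0]
    calc ((a-1).factorial * (b-1).factorial : ℚ) *
          ((-1 : ℚ) ^ (b - 1) * ((a + b - j - 1).choose (a - j)) * bernoulli (a + b - j) /
            (a + b - j).factorial * ((n:ℚ) ^ (j - 1) / (j - 1).factorial))
        = ((-1:ℚ)^(b-1) * bernoulli (a+b-j) * (n:ℚ)^(j-1)) *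
            (((a-1).factorial : ℚ) * (b-1).factorial * ((a+b-j-1).choose (a-j))
              / ((a+b-j).factorial * (j-1).factorial)) := by ring
      _ = ((-1:ℚ)^(b-1) * bernoulli (a+b-j) * (n:ℚ)^(j-1)) *
            (((a-1).choose (a-j) : ℚ) / ((a:ℚ)+b-j)) := by rw [hf]
      _ = _ := by ring

lemma stepR2 (a b n : ℕ) (ha : 1 ≤ a) (hb : 1 ≤ b) (hn : 1 ≤ n) :
    ((a-1).factorial * (b-1).factorial : ℚ) * ∑ j ∈ Icc 1 b, lam j b a * pcoef j n
      = - (∑ k ∈ range b, (-1:ℚ)^(b-1-k) * ((b-1).choose k) * bernoulli (a+b-1-k)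
            * (n:ℚ)^k / ((a+b-1-k : ℕ) : ℚ))
        - (0:ℚ)^(a-1) * (n:ℚ)^(b-1) := by
  -- reindex the k-sum over Icc 1 b via k = j-1
  have hre : ∑ k ∈ range b, (-1:ℚ)^(b-1-k) * ((b-1).choose k) * bernoulli (a+b-1-k)
        * (n:ℚ)^k / ((a+b-1-k : ℕ) : ℚ)
      = ∑ j ∈ Icc 1 b, (-1:ℚ)^(b-j) * ((b-1).choose (j-1)) * bernoulli (a+b-j)
        * (n:ℚ)^(j-1) / ((a:ℚ)+b-j) := by
    refine Finset.sum_nbij' (fun k => k+1) (fun j => j-1) ?_ ?_ ?_ ?_ ?_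
    · intro k hk
      simp only [mem_range] at hk
      simp only [mem_Icc]
      omega
    · intro j hj
      simp only [mem_Icc] at hj
      simp only [mem_range]
      omega
    · intro k _
      omega
    · intro j hj
      simp only [mem_Icc] at hj
      omega
    · intro k hk
      simp only [mem_range] at hk
      have e1 : b-1-k = b-(k+1) := by omega
      have e2 : a+b-1-k = a+b-(k+1) := by omega
      have e3 : k+1-1 = k := by omega
      rw [e1, e2, e3]
      have e4 : ((a+b-(k+1) : ℕ) : ℚ) = (a:ℚ) + (b:ℚ) - ((k+1 : ℕ) : ℚ) := by
        rw [Nat.cast_sub (by omega : k+1 ≤ a+b)]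
        push_cast
        ring
      rw [e4]
  rw [hre, Finset.mul_sum, ← Finset.sum_neg_distrib]
  -- 0^(a-1) * n^(b-1) as a sum of ite over Icc 1 b
  have hz : (0:ℚ)^(a-1) * (n:ℚ)^(b-1)
      = ∑ j ∈ Icc 1 b, (if a = 1 ∧ j = b then (n:ℚ)^(b-1) else 0) := by
    by_cases h1 : a = 1
    · subst h1
      simp only [true_and]
      rw [Finset.sum_ite_eq' (Icc 1 b) b (fun _ => (n:ℚ)^(b-1))]
      rw [if_pos (by simp only [mem_Icc]; omega)]
      norm_num
    · have : ∀ j ∈ Icc 1 b, (if a = 1 ∧ j = b then (n:ℚ)^(b-1) else 0) = 0 := by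
        intro j _
        rw [if_neg (by tauto)]
      rw [Finset.sum_congr rfl this]
      rw [zero_pow (by omega : a - 1 ≠ 0)]
      simp
  rw [hz, ← Finset.sum_sub_distrib]
  refine Finset.sum_congr rfl fun j hj => ?_
  simp only [mem_Icc] at hj
  obtain ⟨hj1, hjb⟩ := hj
  have hkp := key_par a b j ha hj1 hjb
  have hf := fact_id b a j hb ha hj1 hjb
  have hn0 : n ≠ 0 := by omega
  rw [lam, pcoef, if_neg hn0]
  have eba : b + a = a + b := Nat.add_comm b a
  rw [eba]
  have hfact : ((a-1).factorial * (b-1).factorial : ℚ) *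
        ((-1 : ℚ) ^ (a - 1) * ((a + b - j - 1).choose (b - j)) * bernoulli (a + b - j) /
          (a + b - j).factorial * ((n:ℚ) ^ (j - 1) / (j - 1).factorial))
      = ((-1:ℚ)^(a-1) * bernoulli (a+b-j) * (n:ℚ)^(j-1)) *
          (((b-1).factorial : ℚ) * (a-1).factorial * ((b+a-j-1).choose (b-j))
            / ((b+a-j).factorial * (j-1).factorial)) := by
    rw [eba]
    ring
  rw [hfact, hf]
  have ebaq : (b:ℚ)+a-j = (a:ℚ)+b-j := by ring
  rw [ebaq]
  by_cases hcond : a = 1 ∧ j = b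
  · rw [if_pos hcond] at hkp ⊢
    obtain ⟨ha1, hjb'⟩ := hcond
    subst hjb'
    linear_combination ((n:ℚ)^(j-1)) * hkp
  · rw [if_neg hcond] at hkp ⊢
    linear_combination ((n:ℚ)^(j-1)) * hkp

lemma master (a b n : ℕ) (ha : 1 ≤ a) (hb : 1 ≤ b) :
    ∑ m ∈ range (n+1), pcoef a m * pcoef b (n-m)
      = (∑ j ∈ Icc 1 a, lam j a b * pcoef j n) + (∑ j ∈ Icc 1 b, lam j b a * pcoef j n)
        + pcoef (a+b) n := by
  by_cases hn : n = 0
  · subst hn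
    simp [pcoef]
  · have hn' : 1 ≤ n := by omega
    have hfact : ((a-1).factorial * (b-1).factorial : ℚ) ≠ 0 := by
      have f1 : ((a-1).factorial : ℚ) ≠ 0 := Nat.cast_ne_zero.mpr (Nat.factorial_ne_zero _)
      have f2 : ((b-1).factorial : ℚ) ≠ 0 := Nat.cast_ne_zero.mpr (Nat.factorial_ne_zero _)
      exact mul_ne_zero f1 f2
    apply mul_left_cancel₀ hfact
    rw [stepL a b n ha hb hn', keyP a b n ha hb, mul_add, mul_add,
      stepR1 a b n ha hb hn', stepR2 a b n ha hb hn']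
    have hR3 : ((a-1).factorial * (b-1).factorial : ℚ) * pcoef (a+b) n
        = (n:ℚ)^(a+b-1) * ((a-1).factorial * (b-1).factorial) / (a+b-1).factorial := by
      rw [pcoef, if_neg hn]
      have e1 : a+b-1-1+1 = a+b-1 := by omega
      rw [show a+b-1 = a+b-1 from rfl]
      have e2 : (a+b) - 1 = a+b-1 := rfl
      ring
    rw [hR3]
    ring

theorem polyLogTilde_mul (a b : ℕ) (ha : 0 < a) (hb : 0 < b) :
    polyLogTilde a * polyLogTilde b =
      (∑ j ∈ Finset.Icc 1 a, lam j a b • polyLogTilde j) +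
        (∑ j ∈ Finset.Icc 1 b, lam j b a • polyLogTilde j) + polyLogTilde (a + b) := by
  ext n
  rw [PowerSeries.coeff_mul, Finset.Nat.sum_antidiagonal_eq_sum_range_succ_mk]
  simp only [map_add, map_sum, PowerSeries.coeff_smul, smul_eq_mul, polyLogTilde,
    PowerSeries.coeff_mk]
  have hm := master a b n ha hb
  simp only [pcoef] at hm
  exact hm
end

section
/- As formal power series in q, [1]·[1] = 2[1,1] + [2] - [1]. -/
/-- The bracket `[s_1,...,s_l] ∈ ℚ[[q]]`, the generating series of the multiple
divisor sum `σ_{s_1-1,...,s_l-1}` divided by `(s_1-1)! ⋯ (s_l-1)!`. -/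
noncomputable def bracket {l : ℕ} (s : Fin l → ℕ) : PowerSeries ℚ :=
  PowerSeries.mk fun n =>
    (msigma (fun i => s i - 1) n : ℚ) / ∏ i, ((s i - 1).factorial : ℚ)

open Finset

lemma m_one (r₀ n : ℕ) : msigma (fun _ : Fin 1 => r₀) n
    = ∑ p ∈ Nat.divisorsAntidiagonal n, p.2 ^ r₀ := by
  unfold msigma
  rw [Finset.sum_bij (fun f _ => (f 0 : ℕ × ℕ))]
  · intro f hf
    simp only [mem_filter, Fintype.mem_piFinset, mem_product, mem_range] at hf
    obtain ⟨hb, hs, h1, h2, -⟩ := hf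
    simp only [Fin.sum_univ_one] at hs
    rw [Nat.mem_divisorsAntidiagonal]
    refine ⟨hs, ?_⟩
    rw [← hs]
    exact Nat.mul_ne_zero (h1 0).ne' (h2 0).ne'
  · intro f hf g hg h
    funext i
    have : i = 0 := Subsingleton.elim _ _
    subst this; exact h
  · intro p hp
    rw [Nat.mem_divisorsAntidiagonal] at hp
    obtain ⟨hs, hn⟩ := hp
    have h1 : 0 < p.1 := by nlinarith [Nat.pos_of_ne_zero hn]
    have h2 : 0 < p.2 := by nlinarith [Nat.pos_of_ne_zero hn]
    refine ⟨fun _ => p, ?_, rfl⟩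
    simp only [mem_filter, Fintype.mem_piFinset, mem_product, mem_range]
    refine ⟨fun i => ⟨?_, ?_⟩, by simpa using hs, fun _ => h1, fun _ => h2, fun i j h => by omega⟩
    · have := Nat.le_mul_of_pos_right p.1 h2; omega
    · have := Nat.le_mul_of_pos_left p.2 h1; omega
  · intro f hf; simp


/-- The set of `((u₁,v₁),(u₂,v₂))` with `u₁v₁+u₂v₂ = n`, all positive. -/
def Tset (n : ℕ) : Finset ((ℕ × ℕ) × (ℕ × ℕ)) :=
  ((Finset.range (n+1) ×ˢ Finset.range (n+1)) ×ˢ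
   (Finset.range (n+1) ×ˢ Finset.range (n+1))).filter
    (fun p => p.1.1 * p.1.2 + p.2.1 * p.2.2 = n ∧
      0 < p.1.1 ∧ 0 < p.1.2 ∧ 0 < p.2.1 ∧ 0 < p.2.2)

lemma mem_Tset {n : ℕ} {p : (ℕ × ℕ) × (ℕ × ℕ)} :
    p ∈ Tset n ↔ p.1.1 * p.1.2 + p.2.1 * p.2.2 = n ∧
      0 < p.1.1 ∧ 0 < p.1.2 ∧ 0 < p.2.1 ∧ 0 < p.2.2 := by
  unfold Tset
  simp only [mem_filter, mem_product, mem_range]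
  constructor
  · tauto
  · rintro ⟨hs, h1, h2, h3, h4⟩
    refine ⟨⟨⟨?_, ?_⟩, ?_, ?_⟩, hs, h1, h2, h3, h4⟩ <;> nlinarith

lemma Tset_eq (n : ℕ) : Tset n = (Finset.HasAntidiagonal.antidiagonal n).biUnion
    (fun a => Nat.divisorsAntidiagonal a.1 ×ˢ Nat.divisorsAntidiagonal a.2) := by
  ext p
  rw [mem_Tset, mem_biUnion]
  constructor
  · rintro ⟨hs, h1, h2, h3, h4⟩
    refine ⟨(p.1.1 * p.1.2, p.2.1 * p.2.2), by simpa using hs, ?_⟩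
    simp only [mem_product, Nat.mem_divisorsAntidiagonal]
    exact ⟨⟨by simp, Nat.mul_ne_zero h1.ne' h2.ne'⟩, by simp, Nat.mul_ne_zero h3.ne' h4.ne'⟩
  · rintro ⟨a, ha, hp⟩
    simp only [mem_product, Nat.mem_divisorsAntidiagonal] at hp
    obtain ⟨⟨e1, n1⟩, e2, n2⟩ := hp
    rw [Finset.HasAntidiagonal.mem_antidiagonal] at ha
    have h1 : 0 < p.1.1 := by nlinarith [Nat.pos_of_ne_zero n1]
    have h2 : 0 < p.1.2 := by nlinarith [Nat.pos_of_ne_zero n1]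
    have h3 : 0 < p.2.1 := by nlinarith [Nat.pos_of_ne_zero n2]
    have h4 : 0 < p.2.2 := by nlinarith [Nat.pos_of_ne_zero n2]
    exact ⟨by omega, h1, h2, h3, h4⟩

lemma card_Tset (n : ℕ) : (Tset n).card = ∑ a ∈ Finset.HasAntidiagonal.antidiagonal n,
    (Nat.divisorsAntidiagonal a.1).card * (Nat.divisorsAntidiagonal a.2).card := by
  rw [Tset_eq, Finset.card_biUnion]
  · simp [Finset.card_product]
  · intro a ha b hb hab
    simp only [Finset.disjoint_left]
    intro p hp hq
    simp only [mem_product, Nat.mem_divisorsAntidiagonal] at hp hq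
    rw [Finset.mem_coe, Finset.HasAntidiagonal.mem_antidiagonal] at ha hb
    apply hab
    have : a.1 = b.1 := by omega
    have : a.2 = b.2 := by omega
    exact Prod.ext ‹a.1 = b.1› this

lemma m_two (n : ℕ) : msigma (fun _ : Fin 2 => 0) n
    = ((Tset n).filter (fun p => p.2.1 < p.1.1)).card := by
  unfold msigma
  simp only [pow_zero, Finset.prod_const_one, Finset.sum_const, smul_eq_mul, mul_one]
  apply Finset.card_bij (fun f _ => ((f 0 : ℕ × ℕ), (f 1 : ℕ × ℕ)))
  · intro f hf
    simp only [mem_filter, Fintype.mem_piFinset, mem_product, mem_range] at hf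
    obtain ⟨hb, hs, h1, h2, hlt⟩ := hf
    rw [Fin.sum_univ_two] at hs
    rw [mem_filter, mem_Tset]
    exact ⟨⟨hs, h1 0, h2 0, h1 1, h2 1⟩, hlt 0 1 (by norm_num)⟩
  · intro f hf g hg h
    funext i
    fin_cases i
    · exact congrArg Prod.fst h
    · exact congrArg Prod.snd h
  · intro p hp
    rw [mem_filter, mem_Tset] at hp
    obtain ⟨⟨hs, h1, h2, h3, h4⟩, hlt⟩ := hp
    refine ⟨![p.1, p.2], ?_, by simp⟩
    simp only [mem_filter, Fintype.mem_piFinset, mem_product, mem_range]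
    refine ⟨?_, by rw [Fin.sum_univ_two]; simpa using hs, ?_, ?_, ?_⟩
    · intro i; fin_cases i <;> simp <;> constructor <;> nlinarith
    · intro i; fin_cases i <;> simpa
    · intro i; fin_cases i <;> simpa
    · intro i j hij
      fin_cases i <;> fin_cases j <;> simp_all <;> omega

lemma card_lt_symm (n : ℕ) :
    ((Tset n).filter (fun p => p.1.1 < p.2.1)).card
      = ((Tset n).filter (fun p => p.2.1 < p.1.1)).card := by
  apply Finset.card_bij (fun p _ => Prod.swap p)
  · intro p hp
    rw [mem_filter, mem_Tset] at hp ⊢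
    obtain ⟨⟨hs, h1, h2, h3, h4⟩, hlt⟩ := hp
    simp only [Prod.fst_swap, Prod.snd_swap]
    exact ⟨⟨by omega, h3, h4, h1, h2⟩, hlt⟩
  · intro p _ q _ h
    exact Prod.swap_injective h
  · intro p hp
    rw [mem_filter, mem_Tset] at hp
    obtain ⟨⟨hs, h1, h2, h3, h4⟩, hlt⟩ := hp
    refine ⟨Prod.swap p, ?_, by simp⟩
    rw [mem_filter, mem_Tset]
    simp only [Prod.fst_swap, Prod.snd_swap]
    exact ⟨⟨by omega, h3, h4, h1, h2⟩, hlt⟩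

lemma card_eq_part (n : ℕ) :
    ((Tset n).filter (fun p => p.1.1 = p.2.1)).card
      = ∑ a ∈ Nat.divisorsAntidiagonal n, (a.2 - 1) := by
  have : (Tset n).filter (fun p => p.1.1 = p.2.1)
      = (Nat.divisorsAntidiagonal n).biUnion
        (fun a => (Finset.Ico 1 a.2).image (fun v => ((a.1, v), (a.1, a.2 - v)))) := by
    ext p
    rw [mem_filter, mem_Tset, mem_biUnion]
    constructor
    · rintro ⟨⟨hs, h1, h2, h3, h4⟩, he⟩
      refine ⟨(p.1.1, p.1.2 + p.2.2), ?_, ?_⟩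
      · rw [Nat.mem_divisorsAntidiagonal]
        have hp : 0 < p.1.1 * p.1.2 := Nat.mul_pos h1 h2
        have hkey : p.1.1 * (p.1.2 + p.2.2) = n := by
          rw [he] at hs
          rw [mul_add, he]
          exact hs
        exact ⟨hkey, by omega⟩
      · rw [Finset.mem_image]
        refine ⟨p.1.2, by rw [Finset.mem_Ico]; omega, ?_⟩
        have : p.1.2 + p.2.2 - p.1.2 = p.2.2 := by omega
        rw [this]
        ext <;> simp <;> omega
    · rintro ⟨a, ha, hp⟩
      rw [Nat.mem_divisorsAntidiagonal] at ha
      rw [Finset.mem_image] at hp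
      obtain ⟨v, hv, rfl⟩ := hp
      rw [Finset.mem_Ico] at hv
      have h1 : 0 < a.1 := by nlinarith [Nat.pos_of_ne_zero ha.2]
      have hv2 : 0 < a.2 - v := by omega
      have hkey : a.1 * v + a.1 * (a.2 - v) = n := by
        rw [← Nat.mul_add, show v + (a.2 - v) = a.2 by omega]
        exact ha.1
      exact ⟨⟨hkey, h1, hv.1, h1, hv2⟩, rfl⟩
  rw [this, Finset.card_biUnion]
  · congr 1
    funext a
    rw [Finset.card_image_of_injective _ (by intro x y h; simpa using congrArg (fun q => q.1.2) h)]
    simp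
  · intro a ha b hb hab
    simp only [Finset.disjoint_left]
    intro p hp hq
    rw [Finset.mem_image] at hp hq
    obtain ⟨v, hv, rfl⟩ := hp
    obtain ⟨w, hw, he⟩ := hq
    rw [Finset.mem_coe, Nat.mem_divisorsAntidiagonal] at ha hb
    apply hab
    have e1 : b.1 = a.1 := by simpa using congrArg (fun q => q.1.1) he
    have e2 : w = v := by simpa using congrArg (fun q => q.1.2) he
    have e3 : b.2 - w = a.2 - v := by simpa using congrArg (fun q => q.2.2) he
    rw [Finset.mem_Ico] at hv hw
    ext
    · omega
    · omega

lemma key (n : ℕ) :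
    ∑ a ∈ Finset.HasAntidiagonal.antidiagonal n,
        msigma (fun _ : Fin 1 => 0) a.1 * msigma (fun _ : Fin 1 => 0) a.2
      + msigma (fun _ : Fin 1 => 0) n
    = 2 * msigma (fun _ : Fin 2 => 0) n + msigma (fun _ : Fin 1 => 1) n := by
  have hm0 : ∀ m, msigma (fun _ : Fin 1 => 0) m = (Nat.divisorsAntidiagonal m).card := by
    intro m; rw [m_one]; simp
  have hm1 : msigma (fun _ : Fin 1 => 1) n = ∑ a ∈ Nat.divisorsAntidiagonal n, a.2 := by
    rw [m_one]; simp
  simp only [hm0, hm1, m_two]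
  -- split Tset into three parts
  have h1 := Finset.card_filter_add_card_filter_not (s := Tset n)
    (p := fun p => p.2.1 < p.1.1)
  have h2 := Finset.card_filter_add_card_filter_not
    (s := (Tset n).filter (fun p => ¬ p.2.1 < p.1.1)) (p := fun p => p.1.1 < p.2.1)
  rw [Finset.filter_filter, Finset.filter_filter] at h2
  have e1 : (Tset n).filter (fun p => ¬ p.2.1 < p.1.1 ∧ p.1.1 < p.2.1)
      = (Tset n).filter (fun p => p.1.1 < p.2.1) :=
    Finset.filter_congr (fun x _ => by constructor <;> [exact And.right; exact fun h => ⟨by omega, h⟩])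
  have e2 : (Tset n).filter (fun p => ¬ p.2.1 < p.1.1 ∧ ¬ p.1.1 < p.2.1)
      = (Tset n).filter (fun p => p.1.1 = p.2.1) :=
    Finset.filter_congr (fun x _ => by constructor <;> intro h <;> omega)
  rw [e1, e2] at h2
  have h3 := card_lt_symm n
  have h4 := card_eq_part n
  have h5 := card_Tset n
  have h6 : ∑ a ∈ Nat.divisorsAntidiagonal n, a.2
      = ∑ a ∈ Nat.divisorsAntidiagonal n, (a.2 - 1) + (Nat.divisorsAntidiagonal n).card := by
    rw [Finset.card_eq_sum_ones, ← Finset.sum_add_distrib]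
    apply Finset.sum_congr rfl
    intro a ha
    rw [Nat.mem_divisorsAntidiagonal] at ha
    have : 0 < a.2 := by nlinarith [Nat.pos_of_ne_zero ha.2]
    omega
  omega

theorem bracket_one_mul_one :
    bracket ![1] * bracket ![1] = 2 * bracket ![1, 1] + bracket ![2] - bracket ![1] := by
  have e1 : (fun i : Fin 1 => ![1] i - 1) = fun _ => 0 := by
    funext i; fin_cases i; rfl
  have e2 : (fun i : Fin 2 => ![1, 1] i - 1) = fun _ => 0 := by
    funext i; fin_cases i <;> rfl
  have e3 : (fun i : Fin 1 => ![2] i - 1) = fun _ => 1 := by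
    funext i; fin_cases i; rfl
  ext n
  rw [two_mul, map_sub, map_add, map_add, PowerSeries.coeff_mul]
  unfold bracket
  rw [e1, e2, e3]
  simp only [PowerSeries.coeff_mk, Nat.factorial_zero, Nat.factorial_one, Nat.cast_one,
    Finset.prod_const_one, div_one]
  have hk := key n
  rw [two_mul] at hk
  have hq : ((∑ a ∈ Finset.HasAntidiagonal.antidiagonal n,
      msigma (fun _ : Fin 1 => 0) a.1 * msigma (fun _ : Fin 1 => 0) a.2 : ℕ) : ℚ)
      + (msigma (fun _ : Fin 1 => 0) n : ℚ)
      = (msigma (fun _ : Fin 2 => 0) n : ℚ) + (msigma (fun _ : Fin 2 => 0) n : ℚ)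
      + (msigma (fun _ : Fin 1 => 1) n : ℚ) := by
    exact_mod_cast congrArg (Nat.cast : ℕ → ℚ) hk
  push_cast at hq
  norm_num [Fin.prod_univ_one, Fin.prod_univ_two, Matrix.cons_val_zero, Matrix.cons_val_one,
    Matrix.head_cons]
  linarith [hq]
end

section
/- As formal power series in q, [1]·[2] = [1,2] + [2,1] + [3] - (1/2)[2]. -/
open Finset

namespace BracketAux

/-- divisor pairs of `n`. -/
def D (n : ℕ) : Finset (ℕ × ℕ) :=
  (Finset.range (n+1) ×ˢ Finset.range (n+1)).filter
    fun p => p.1 * p.2 = n ∧ 0 < p.1 ∧ 0 < p.2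

lemma mem_D {n : ℕ} {p : ℕ × ℕ} : p ∈ D n ↔ p.1 * p.2 = n ∧ 0 < p.1 ∧ 0 < p.2 := by
  constructor
  · exact fun h => (Finset.mem_filter.mp h).2
  · intro h
    have h1 : p.1 ≤ n := h.1 ▸ Nat.le_mul_of_pos_right _ h.2.2
    have h2 : p.2 ≤ n := h.1 ▸ Nat.le_mul_of_pos_left _ h.2.1
    exact Finset.mem_filter.mpr ⟨Finset.mem_product.mpr
      ⟨Finset.mem_range.mpr (by omega), Finset.mem_range.mpr (by omega)⟩, h⟩

/-- pairs of divisor pairs summing to `n`. -/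
def E (n : ℕ) : Finset ((ℕ × ℕ) × (ℕ × ℕ)) :=
  ((Finset.range (n+1) ×ˢ Finset.range (n+1)) ×ˢ
      (Finset.range (n+1) ×ˢ Finset.range (n+1))).filter
    fun p => p.1.1 * p.1.2 + p.2.1 * p.2.2 = n ∧
      0 < p.1.1 ∧ 0 < p.1.2 ∧ 0 < p.2.1 ∧ 0 < p.2.2

lemma mem_E {n : ℕ} {p : (ℕ × ℕ) × (ℕ × ℕ)} :
    p ∈ E n ↔ p.1.1 * p.1.2 + p.2.1 * p.2.2 = n ∧
      0 < p.1.1 ∧ 0 < p.1.2 ∧ 0 < p.2.1 ∧ 0 < p.2.2 := by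
  constructor
  · exact fun h => (Finset.mem_filter.mp h).2
  · intro h
    obtain ⟨hs, h1, h2, h3, h4⟩ := h
    have b1 : p.1.1 ≤ p.1.1 * p.1.2 := Nat.le_mul_of_pos_right _ h2
    have b2 : p.1.2 ≤ p.1.1 * p.1.2 := Nat.le_mul_of_pos_left _ h1
    have b3 : p.2.1 ≤ p.2.1 * p.2.2 := Nat.le_mul_of_pos_right _ h4
    have b4 : p.2.2 ≤ p.2.1 * p.2.2 := Nat.le_mul_of_pos_left _ h3
    refine Finset.mem_filter.mpr ⟨Finset.mem_product.mpr
      ⟨Finset.mem_product.mpr ⟨?_, ?_⟩, Finset.mem_product.mpr ⟨?_, ?_⟩⟩,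
      ⟨hs, h1, h2, h3, h4⟩⟩ <;> exact Finset.mem_range.mpr (by omega)

lemma msigma_one (r n : ℕ) : msigma ![r] n = ∑ p ∈ D n, p.2 ^ r := by
  unfold msigma
  refine Finset.sum_nbij' (fun f => f 0) (fun p => fun _ => p) ?_ ?_ ?_ ?_ ?_
  · intro f hf
    rw [Finset.mem_filter, Fintype.mem_piFinset] at hf
    obtain ⟨hbox, hs, h1, h2, _⟩ := hf
    rw [Fin.sum_univ_one] at hs
    exact mem_D.mpr ⟨hs, h1 0, h2 0⟩
  · intro p hp
    rw [mem_D] at hp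
    rw [Finset.mem_filter, Fintype.mem_piFinset]
    have h1 : p.1 ≤ n := hp.1 ▸ Nat.le_mul_of_pos_right _ hp.2.2
    have h2 : p.2 ≤ n := hp.1 ▸ Nat.le_mul_of_pos_left _ hp.2.1
    refine ⟨fun i => Finset.mem_product.mpr ⟨Finset.mem_range.mpr (Nat.lt_succ_of_le h1),
        Finset.mem_range.mpr (Nat.lt_succ_of_le h2)⟩, ?_, fun i => hp.2.1, fun i => hp.2.2,
      fun i j hij => absurd hij (by rw [Subsingleton.elim i j]; exact lt_irrefl j)⟩
    simp only [Fin.sum_univ_one]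
    exact hp.1
  · intro f _; funext i; rw [Subsingleton.elim i 0]
  · intro p _; rfl
  · intro f _; rw [Fin.prod_univ_one]; rfl

lemma msigma_two (r s n : ℕ) :
    msigma ![r, s] n =
      ∑ p ∈ (E n).filter (fun p => p.2.1 < p.1.1), p.1.2 ^ r * p.2.2 ^ s := by
  unfold msigma
  refine Finset.sum_nbij' (fun f => (f 0, f 1)) (fun p => ![p.1, p.2]) ?_ ?_ ?_ ?_ ?_
  · intro f hf
    rw [Finset.mem_filter, Fintype.mem_piFinset] at hf
    obtain ⟨hbox, hs, h1, h2, h3⟩ := hf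
    rw [Fin.sum_univ_two] at hs
    rw [Finset.mem_filter]
    exact ⟨mem_E.mpr ⟨hs, h1 0, h2 0, h1 1, h2 1⟩, h3 0 1 (by decide)⟩
  · intro p hp
    rw [Finset.mem_filter, mem_E] at hp
    obtain ⟨⟨hs, h1, h2, h3, h4⟩, hlt⟩ := hp
    rw [Finset.mem_filter, Fintype.mem_piFinset]
    have b1 : p.1.1 ≤ n := by nlinarith
    have b2 : p.1.2 ≤ n := by nlinarith
    have b3 : p.2.1 ≤ n := by nlinarith
    have b4 : p.2.2 ≤ n := by nlinarith
    refine ⟨fun i => ?_, ?_, fun i => ?_, fun i => ?_, fun i j hij => ?_⟩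
    · fin_cases i <;>
        · simp only [Fin.mk_zero, Fin.mk_one, Matrix.cons_val_zero, Matrix.cons_val_one, Matrix.head_cons]
          exact Finset.mem_product.mpr
            ⟨Finset.mem_range.mpr (by omega), Finset.mem_range.mpr (by omega)⟩
    · simp only [Fin.sum_univ_two, Fin.mk_zero, Fin.mk_one, Matrix.cons_val_zero, Matrix.cons_val_one, Matrix.head_cons]
      exact hs
    · fin_cases i <;>
        simp only [Fin.mk_zero, Fin.mk_one, Matrix.cons_val_zero, Matrix.cons_val_one, Matrix.head_cons] <;>
        assumption
    · fin_cases i <;>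
        simp only [Fin.mk_zero, Fin.mk_one, Matrix.cons_val_zero, Matrix.cons_val_one, Matrix.head_cons] <;>
        assumption
    · fin_cases i <;> fin_cases j <;>
        simp_all only [Fin.mk_zero, Fin.mk_one, Matrix.cons_val_zero, Matrix.cons_val_one, Matrix.head_cons] <;>
        first
          | exact absurd hij (by decide)
          | exact hlt
  · intro f _; funext i; fin_cases i <;> rfl
  · intro p _; rfl
  · intro f _; rw [Fin.prod_univ_two]; rfl

lemma merge (n : ℕ) :
    ∑ x ∈ Finset.HasAntidiagonal.antidiagonal n, (msigma ![0] x.1) * (msigma ![1] x.2) =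
      ∑ p ∈ E n, p.2.2 := by
  have : ∀ x ∈ Finset.HasAntidiagonal.antidiagonal n,
      (msigma ![0] x.1) * (msigma ![1] x.2) = ∑ p ∈ D x.1 ×ˢ D x.2, p.2.2 := by
    intro x _
    rw [msigma_one, msigma_one, Finset.sum_mul_sum]
    rw [Finset.sum_product]
    refine Finset.sum_congr rfl fun p _ => ?_
    refine Finset.sum_congr rfl fun q _ => ?_
    simp [pow_zero, pow_one]
  rw [Finset.sum_congr rfl this, Finset.sum_sigma' (Finset.HasAntidiagonal.antidiagonal n)
    (fun x => D x.1 ×ˢ D x.2) (fun _ p => p.2.2)]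
  refine Finset.sum_nbij' (fun t => t.2)
    (fun p => ⟨(p.1.1 * p.1.2, p.2.1 * p.2.2), p⟩) ?_ ?_ ?_ ?_ ?_
  · intro t ht
    rw [Finset.mem_sigma] at ht
    obtain ⟨hx, hp⟩ := ht
    simp only [Finset.mem_product, mem_D] at hp
    obtain ⟨⟨e1, p1, p2⟩, ⟨e2, p3, p4⟩⟩ := hp
    rw [Finset.HasAntidiagonal.mem_antidiagonal] at hx
    show t.snd ∈ E n
    exact mem_E.mpr ⟨by omega, p1, p2, p3, p4⟩
  · intro p hp
    rw [mem_E] at hp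
    obtain ⟨hs, h1, h2, h3, h4⟩ := hp
    rw [Finset.mem_sigma, Finset.HasAntidiagonal.mem_antidiagonal, Finset.mem_product, mem_D, mem_D]
    exact ⟨hs, ⟨rfl, h1, h2⟩, ⟨rfl, h3, h4⟩⟩
  · intro t ht
    rw [Finset.mem_sigma] at ht
    obtain ⟨hx, hp⟩ := ht
    simp only [Finset.mem_product, mem_D] at hp
    obtain ⟨⟨e1, _⟩, ⟨e2, _⟩⟩ := hp
    have : (t.2.1.1 * t.2.1.2, t.2.2.1 * t.2.2.2) = t.1 := by
      rw [e1, e2]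
    exact Sigma.ext this (by simp)
  · intro p _; rfl
  · intro t _; rfl

lemma swap_sum (n : ℕ) (P : (ℕ × ℕ) × (ℕ × ℕ) → Prop) [DecidablePred P]
    (w : (ℕ × ℕ) × (ℕ × ℕ) → ℕ) :
    ∑ p ∈ (E n).filter P, w p =
      ∑ p ∈ (E n).filter (fun p => P (p.2, p.1)), w (p.2, p.1) := by
  refine Finset.sum_nbij' (fun p => (p.2, p.1)) (fun p => (p.2, p.1)) ?_ ?_ ?_ ?_ ?_
  · intro p hp
    show (p.2, p.1) ∈ _
    rw [Finset.mem_filter, mem_E] at hp ⊢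
    exact ⟨⟨show p.2.1 * p.2.2 + p.1.1 * p.1.2 = n by omega, hp.1.2.2.2.1, hp.1.2.2.2.2,
      hp.1.2.1, hp.1.2.2.1⟩, hp.2⟩
  · intro p hp
    show (p.2, p.1) ∈ _
    rw [Finset.mem_filter, mem_E] at hp ⊢
    exact ⟨⟨show p.2.1 * p.2.2 + p.1.1 * p.1.2 = n by omega, hp.1.2.2.2.1, hp.1.2.2.2.2,
      hp.1.2.1, hp.1.2.2.1⟩, hp.2⟩
  · intro p _; rfl
  · intro p _; rfl
  · intro p _; rfl

lemma split (n : ℕ) (w : (ℕ × ℕ) × (ℕ × ℕ) → ℕ) :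
    ∑ p ∈ E n, w p =
      (∑ p ∈ (E n).filter (fun p => p.2.1 < p.1.1), w p) +
      ((∑ p ∈ (E n).filter (fun p => p.1.1 < p.2.1), w p) +
       (∑ p ∈ (E n).filter (fun p => p.1.1 = p.2.1), w p)) := by
  rw [← Finset.sum_filter_add_sum_filter_not (E n) (fun p => p.2.1 < p.1.1) w]
  congr 1
  rw [← Finset.sum_filter_add_sum_filter_not ((E n).filter (fun p => ¬ p.2.1 < p.1.1))
    (fun p => p.1.1 < p.2.1) w, Finset.filter_filter, Finset.filter_filter]
  congr 1
  · refine Finset.sum_congr (Finset.filter_congr fun p _ => ?_) fun _ _ => rfl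
    constructor <;> intro h
    · exact h.2
    · exact ⟨by omega, h⟩
  · refine Finset.sum_congr (Finset.filter_congr fun p _ => ?_) fun _ _ => rfl
    constructor <;> intro h <;> omega

lemma sigma01 (n : ℕ) :
    msigma ![0, 1] n = ∑ p ∈ (E n).filter (fun p => p.2.1 < p.1.1), p.2.2 := by
  rw [msigma_two]
  exact Finset.sum_congr rfl fun p _ => by rw [pow_zero, pow_one, one_mul]

lemma sigma10 (n : ℕ) :
    msigma ![1, 0] n = ∑ p ∈ (E n).filter (fun p => p.1.1 < p.2.1), p.2.2 := by
  rw [msigma_two, swap_sum n (fun p => p.2.1 < p.1.1) (fun p => p.1.2 ^ 1 * p.2.2 ^ 0)]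
  refine Finset.sum_congr (Finset.filter_congr fun p _ => Iff.rfl) fun p _ => by
    simp [pow_zero, pow_one]

lemma eq_swap (n : ℕ) :
    ∑ p ∈ (E n).filter (fun p => p.1.1 = p.2.1), p.2.2 =
      ∑ p ∈ (E n).filter (fun p => p.1.1 = p.2.1), p.1.2 := by
  rw [swap_sum n (fun p => p.1.1 = p.2.1) (fun p => p.2.2)]
  exact Finset.sum_congr (Finset.filter_congr fun p _ => eq_comm) fun p _ => rfl

/-- auxiliary set: a divisor pair of `n` together with a proper splitting point. -/
def F (n : ℕ) : Finset ((ℕ × ℕ) × ℕ) :=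
  (D n ×ˢ Finset.range (n+1)).filter fun t => 0 < t.2 ∧ t.2 < t.1.2

lemma eq_to_F (n : ℕ) :
    ∑ p ∈ (E n).filter (fun p => p.1.1 = p.2.1), (p.1.2 + p.2.2) =
      ∑ t ∈ F n, t.1.2 := by
  refine Finset.sum_nbij' (fun p => ((p.1.1, p.1.2 + p.2.2), p.1.2))
    (fun t => ((t.1.1, t.2), (t.1.1, t.1.2 - t.2))) ?_ ?_ ?_ ?_ ?_
  · rintro ⟨⟨u1, v1⟩, u2, v2⟩ hp
    rw [Finset.mem_filter, mem_E] at hp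
    obtain ⟨⟨hs, h1, h2, h3, h4⟩, heq⟩ := hp
    dsimp only at hs h1 h2 h3 h4 heq ⊢
    subst heq
    rw [← Nat.mul_add] at hs
    have hwn : v1 + v2 ≤ n := hs ▸ Nat.le_mul_of_pos_left _ h1
    refine Finset.mem_filter.mpr ⟨Finset.mem_product.mpr
      ⟨mem_D.mpr ⟨hs, h1, ?_⟩, Finset.mem_range.mpr ?_⟩, ?_, ?_⟩
    · show 0 < v1 + v2; omega
    · show v1 < n + 1; omega
    · show 0 < v1; omega
    · show v1 < v1 + v2; omega
  · rintro ⟨⟨u, w⟩, v⟩ ht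
    unfold F at ht
    rw [Finset.mem_filter, Finset.mem_product, mem_D] at ht
    obtain ⟨⟨⟨hs, h1, h2⟩, _⟩, h3, h4⟩ := ht
    dsimp only at hs h1 h2 h3 h4 ⊢
    rw [Finset.mem_filter, mem_E]
    refine ⟨⟨?_, h1, h3, h1, ?_⟩, rfl⟩
    · show u * v + u * (w - v) = n
      rw [← Nat.mul_add, show v + (w - v) = w by omega]
      exact hs
    · show 0 < w - v; omega
  · rintro ⟨⟨u1, v1⟩, u2, v2⟩ hp
    rw [Finset.mem_filter, mem_E] at hp
    obtain ⟨⟨hs, h1, h2, h3, h4⟩, heq⟩ := hp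
    dsimp only at heq ⊢
    subst heq
    show ((u1, v1), (u1, v1 + v2 - v1)) = ((u1, v1), (u1, v2))
    rw [show v1 + v2 - v1 = v2 by omega]
  · rintro ⟨⟨u, w⟩, v⟩ ht
    unfold F at ht
    rw [Finset.mem_filter, Finset.mem_product] at ht
    obtain ⟨_, h3, h4⟩ := ht
    dsimp only at h3 h4
    show ((u, v + (w - v)), v) = ((u, w), v)
    rw [show v + (w - v) = w by omega]
  · intro p _; rfl

lemma F_sum (n : ℕ) : ∑ t ∈ F n, t.1.2 = ∑ q ∈ D n, (q.2 - 1) * q.2 := by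
  unfold F
  rw [Finset.sum_filter, Finset.sum_product]
  refine Finset.sum_congr rfl fun q hq => ?_
  have hq2 : q.2 ≤ n := (mem_D.mp hq).1 ▸ Nat.le_mul_of_pos_left _ (mem_D.mp hq).2.1
  have hcongr : ∀ v ∈ Finset.range (n+1),
      (if 0 < ((q, v) : (ℕ × ℕ) × ℕ).2 ∧ ((q, v) : (ℕ × ℕ) × ℕ).2 < ((q, v) : (ℕ × ℕ) × ℕ).1.2
        then ((q, v) : (ℕ × ℕ) × ℕ).1.2 else 0) =
      if 0 < v ∧ v < q.2 then q.2 else 0 := fun v _ => rfl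
  rw [Finset.sum_congr rfl hcongr, ← Finset.sum_filter]
  have hfil : (Finset.range (n+1)).filter (fun v => 0 < v ∧ v < q.2) =
      Finset.Ico 1 q.2 := by
    ext v
    simp only [Finset.mem_filter, Finset.mem_range, Finset.mem_Ico]
    omega
  rw [hfil, Finset.sum_const, Nat.card_Ico, smul_eq_mul]

lemma eq_part (n : ℕ) :
    2 * ∑ p ∈ (E n).filter (fun p => p.1.1 = p.2.1), p.2.2 + msigma ![1] n =
      msigma ![2] n := by
  have h2 : 2 * ∑ p ∈ (E n).filter (fun p => p.1.1 = p.2.1), p.2.2 =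
      ∑ p ∈ (E n).filter (fun p => p.1.1 = p.2.1), (p.1.2 + p.2.2) := by
    rw [Finset.sum_add_distrib, two_mul]
    rw [eq_swap]
  rw [h2, eq_to_F, F_sum, msigma_one, msigma_one]
  rw [← Finset.sum_add_distrib]
  refine Finset.sum_congr rfl fun q hq => ?_
  have h1 : 0 < q.2 := (mem_D.mp hq).2.2
  obtain ⟨w, hw⟩ : ∃ w, q.2 = w + 1 := ⟨q.2 - 1, by omega⟩
  rw [pow_one, hw, Nat.add_sub_cancel]
  ring

/-- the key natural-number identity. -/
lemma key (n : ℕ) :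
    2 * ∑ x ∈ Finset.HasAntidiagonal.antidiagonal n, (msigma ![0] x.1) * (msigma ![1] x.2) + msigma ![1] n =
      2 * msigma ![0, 1] n + 2 * msigma ![1, 0] n + msigma ![2] n := by
  rw [merge, split n (fun p => p.2.2), sigma01, sigma10, ← eq_part n]
  ring

end BracketAux

lemma fin1_sub (a b : ℕ) : (fun i : Fin 1 => ![a] i - b) = ![a - b] := by
  funext i; fin_cases i <;> rfl

lemma fin2_sub (a b c : ℕ) : (fun i : Fin 2 => ![a, b] i - c) = ![a - c, b - c] := by
  funext i; fin_cases i <;> rfl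

open BracketAux in
lemma keyQ (n : ℕ) :
    ∑ x ∈ Finset.HasAntidiagonal.antidiagonal n, (msigma ![0] x.1 : ℚ) * (msigma ![1] x.2 : ℚ) =
      (msigma ![0, 1] n : ℚ) + (msigma ![1, 0] n : ℚ) + (msigma ![2] n : ℚ) / 2 -
        1 / 2 * (msigma ![1] n : ℚ) := by
  have h := congrArg (fun m : ℕ => (m : ℚ)) (BracketAux.key n)
  push_cast at h
  linarith

lemma coeff_b1 (n : ℕ) :
    PowerSeries.coeff n (bracket ![1]) = (msigma ![0] n : ℚ) := by
  simp only [bracket, PowerSeries.coeff_mk]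
  rw [show (fun i : Fin 1 => ![1] i - 1) = ![0] from by funext i; fin_cases i <;> rfl,
    Fin.prod_univ_one]
  norm_num [Nat.factorial]

lemma coeff_b2 (n : ℕ) :
    PowerSeries.coeff n (bracket ![2]) = (msigma ![1] n : ℚ) := by
  simp only [bracket, PowerSeries.coeff_mk]
  rw [show (fun i : Fin 1 => ![2] i - 1) = ![1] from by funext i; fin_cases i <;> rfl,
    Fin.prod_univ_one]
  norm_num [Nat.factorial]

lemma coeff_b3 (n : ℕ) :
    PowerSeries.coeff n (bracket ![3]) = (msigma ![2] n : ℚ) / 2 := by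
  simp only [bracket, PowerSeries.coeff_mk]
  rw [show (fun i : Fin 1 => ![3] i - 1) = ![2] from by funext i; fin_cases i <;> rfl,
    Fin.prod_univ_one]
  norm_num [Nat.factorial]

lemma coeff_b12 (n : ℕ) :
    PowerSeries.coeff n (bracket ![1, 2]) = (msigma ![0, 1] n : ℚ) := by
  simp only [bracket, PowerSeries.coeff_mk]
  rw [show (fun i : Fin 2 => ![1, 2] i - 1) = ![0, 1] from by funext i; fin_cases i <;> rfl,
    Fin.prod_univ_two]
  norm_num [Nat.factorial]

lemma coeff_b21 (n : ℕ) :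
    PowerSeries.coeff n (bracket ![2, 1]) = (msigma ![1, 0] n : ℚ) := by
  simp only [bracket, PowerSeries.coeff_mk]
  rw [show (fun i : Fin 2 => ![2, 1] i - 1) = ![1, 0] from by funext i; fin_cases i <;> rfl,
    Fin.prod_univ_two]
  norm_num [Nat.factorial]

theorem bracket_one_mul_two :
    bracket ![1] * bracket ![2] =
      bracket ![1, 2] + bracket ![2, 1] + bracket ![3] - (1 / 2 : ℚ) • bracket ![2] := by
  refine PowerSeries.ext fun n => ?_
  rw [PowerSeries.coeff_mul]
  simp only [map_add, map_sub, PowerSeries.coeff_smul, coeff_b1, coeff_b2, coeff_b3,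
    coeff_b12, coeff_b21, smul_eq_mul]
  rw [keyQ n]
end

section
/- For integers a, b > 1, λ^1_{a,b} + λ^1_{b,a} = 0, where λ^j_{a,b} = (-1)^{b-1} C(a+b-j-1, a-j) B_{a+b-j}/(a+b-j)!. -/
theorem lam_one_add_lam_one (a b : ℕ) (ha : 1 < a) (hb : 1 < b) :
    lam 1 a b + lam 1 b a = 0 := by
  unfold lam
  have hba : b + a - 1 = a + b - 1 := by omega
  have hchoose : (a + b - 1 - 1).choose (b - 1) = (a + b - 1 - 1).choose (a - 1) := by
    rw [← Nat.choose_symm (by omega : a - 1 ≤ a + b - 1 - 1)]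
    congr 1; omega
  rw [hba, hchoose]
  rcases Nat.even_or_odd (a + b) with hpar | hpar
  · -- a+b even, so a+b-1 odd, bernoulli = 0
    have hodd : Odd (a + b - 1) := by
      rcases hpar with ⟨k, hk⟩; exact ⟨k - 1, by omega⟩
    rw [bernoulli_eq_bernoulli'_of_ne_one (by omega),
        bernoulli'_eq_zero_of_odd hodd (by omega)]
    ring
  · -- a+b odd, signs cancel
    have hsign : (-1 : ℚ) ^ (b - 1) = -(-1 : ℚ) ^ (a - 1) := by
      rcases Nat.even_or_odd a with hae | hae
      · have : Odd b := by rcases hpar with ⟨k,hk⟩; rcases hae with ⟨m,hm⟩; exact ⟨k-m, by omega⟩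
        rw [Even.neg_one_pow (by rcases this with ⟨m,hm⟩; exact ⟨m, by omega⟩),
            Odd.neg_one_pow (by rcases hae with ⟨m,hm⟩; exact ⟨m-1, by omega⟩)]
        ring
      · have : Even b := by rcases hpar with ⟨k,hk⟩; rcases hae with ⟨m,hm⟩; exact ⟨k-m, by omega⟩
        rw [Odd.neg_one_pow (by rcases this with ⟨m,hm⟩; exact ⟨m-1, by omega⟩),
            Even.neg_one_pow (by rcases hae with ⟨m,hm⟩; exact ⟨m, by omega⟩)]
    rw [hsign]; ring
end

section
/- As formal power series in q, [8] = (1/40)[4] - (1/252)[2] + 12[4,4]. -/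
namespace BrAux
open Finset


def sol (n : ℕ) : Finset ((ℕ × ℕ) × ℕ × ℕ) :=
  ((Finset.range (n+1) ×ˢ Finset.range (n+1)) ×ˢ (Finset.range (n+1) ×ˢ Finset.range (n+1))).filter
    (fun p => p.1.1 * p.1.2 + p.2.1 * p.2.2 = n ∧ 0 < p.1.1 ∧ 0 < p.1.2 ∧ 0 < p.2.1 ∧ 0 < p.2.2)

lemma mem_sol {n : ℕ} {p : (ℕ × ℕ) × ℕ × ℕ} : p ∈ sol n ↔
    p.1.1 * p.1.2 + p.2.1 * p.2.2 = n ∧ 0 < p.1.1 ∧ 0 < p.1.2 ∧ 0 < p.2.1 ∧ 0 < p.2.2 := by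
  simp only [sol, Finset.mem_filter, Finset.mem_product, Finset.mem_range]
  constructor
  · rintro ⟨-, h⟩; exact h
  · rintro ⟨heq, ha, hx, hb, hy⟩
    refine ⟨⟨⟨?_, ?_⟩, ?_, ?_⟩, heq, ha, hx, hb, hy⟩ <;> rw [Nat.lt_succ_iff] <;> nlinarith

/-- swap the two pairs -/
lemma sum_swap_pred (n : ℕ) (f : ((ℕ × ℕ) × ℕ × ℕ) → ℚ) (P : ((ℕ × ℕ) × ℕ × ℕ) → Prop)
    [DecidablePred P] :
    ∑ p ∈ (sol n).filter P, f p
      = ∑ p ∈ (sol n).filter (fun p => P (p.2, p.1)), f (p.2, p.1) := by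
  refine Finset.sum_nbij' (fun p => (p.2, p.1)) (fun p => (p.2, p.1)) ?_ ?_ ?_ ?_ ?_
  case refine_1 =>
    intro p hp; simp only [Finset.mem_filter, mem_sol] at *
    exact ⟨⟨by omega, hp.1.2.2.2.1, hp.1.2.2.2.2, hp.1.2.1, hp.1.2.2.1⟩, hp.2⟩
  case refine_2 =>
    intro p hp; simp only [Finset.mem_filter, mem_sol] at *
    exact ⟨⟨by omega, hp.1.2.2.2.1, hp.1.2.2.2.2, hp.1.2.1, hp.1.2.2.1⟩, hp.2⟩
  all_goals intro p hp; rfl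

/-- duality between (a,x) within pairs -/
lemma sum_dual (n : ℕ) (f : ((ℕ × ℕ) × ℕ × ℕ) → ℚ) (P : ((ℕ × ℕ) × ℕ × ℕ) → Prop)
    [DecidablePred P] :
    ∑ p ∈ (sol n).filter P, f p
      = ∑ p ∈ (sol n).filter (fun p => P ((p.1.2, p.1.1), (p.2.2, p.2.1))),
          f ((p.1.2, p.1.1), (p.2.2, p.2.1)) := by
  refine Finset.sum_nbij' (fun p => ((p.1.2, p.1.1), (p.2.2, p.2.1)))
    (fun p => ((p.1.2, p.1.1), (p.2.2, p.2.1))) ?_ ?_ ?_ ?_ ?_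
  case refine_1 =>
    intro p hp; simp only [Finset.mem_filter, mem_sol] at *
    refine ⟨⟨?_, hp.1.2.2.1, hp.1.2.1, hp.1.2.2.2.2, hp.1.2.2.2.1⟩, hp.2⟩
    rw [mul_comm p.1.2, mul_comm p.2.2]; exact hp.1.1
  case refine_2 =>
    intro p hp; simp only [Finset.mem_filter, mem_sol] at *
    refine ⟨⟨?_, hp.1.2.2.1, hp.1.2.1, hp.1.2.2.2.2, hp.1.2.2.2.1⟩, hp.2⟩
    rw [mul_comm p.1.2, mul_comm p.2.2]; exact hp.1.1
  all_goals intro p hp; rfl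

/-- the key involution on the region x > y :
    ((a,x),(b,y)) ↦ ((y, a+b), (x-y, a)) -/
lemma sum_invol (n : ℕ) (f : ((ℕ × ℕ) × ℕ × ℕ) → ℚ) :
    ∑ p ∈ (sol n).filter (fun p => p.2.2 < p.1.2), f p
      = ∑ p ∈ (sol n).filter (fun p => p.2.2 < p.1.2),
          f ((p.2.2, p.1.1 + p.2.1), (p.1.2 - p.2.2, p.1.1)) := by
  have hmem : ∀ p ∈ (sol n).filter (fun p => p.2.2 < p.1.2),
      ((p.2.2, p.1.1 + p.2.1), (p.1.2 - p.2.2, p.1.1))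
        ∈ (sol n).filter (fun p : (ℕ × ℕ) × ℕ × ℕ => p.2.2 < p.1.2) := by
    intro p hp; simp only [Finset.mem_filter, mem_sol] at *
    obtain ⟨⟨heq, ha, hx, hb, hy⟩, hxy⟩ := hp
    refine ⟨⟨?_, hy, by omega, by omega, ha⟩, by omega⟩
    have h1 : (p.1.2 - p.2.2) * p.1.1 + p.2.2 * p.1.1 = p.1.2 * p.1.1 := by
      rw [← Nat.add_mul]; congr 1; omega
    nlinarith [h1]
  have hinv : ∀ p ∈ (sol n).filter (fun p : (ℕ × ℕ) × ℕ × ℕ => p.2.2 < p.1.2),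
      ((((p.2.2, p.1.1 + p.2.1), (p.1.2 - p.2.2, p.1.1)) :
        (ℕ × ℕ) × ℕ × ℕ).2.2,
        ((p.2.2, p.1.1 + p.2.1), (p.1.2 - p.2.2, p.1.1)).1.1
          + ((p.2.2, p.1.1 + p.2.1), (p.1.2 - p.2.2, p.1.1)).2.1) = (p.1.1, p.1.2) ∧
      (((p.2.2, p.1.1 + p.2.1), (p.1.2 - p.2.2, p.1.1)).1.2
          - ((p.2.2, p.1.1 + p.2.1), (p.1.2 - p.2.2, p.1.1)).2.2,
        ((p.2.2, p.1.1 + p.2.1), (p.1.2 - p.2.2, p.1.1)).1.1) = (p.2.1, p.2.2) := by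
    intro p hp; simp only [Finset.mem_filter, mem_sol] at hp
    obtain ⟨⟨heq, ha, hx, hb, hy⟩, hxy⟩ := hp
    dsimp only
    constructor <;> simp only [Prod.mk.injEq, true_and, and_true] <;> omega
  refine Finset.sum_nbij' (fun p => ((p.2.2, p.1.1 + p.2.1), (p.1.2 - p.2.2, p.1.1)))
    (fun p => ((p.2.2, p.1.1 + p.2.1), (p.1.2 - p.2.2, p.1.1))) hmem hmem ?_ ?_ ?_
  · intro p hp
    obtain ⟨h1, h2⟩ := hinv p hp
    exact Prod.ext h1 h2
  · intro p hp
    obtain ⟨h1, h2⟩ := hinv p hp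
    exact Prod.ext h1 h2
  · intro p hp
    congr 1
    exact (Prod.ext (hinv p hp).1 (hinv p hp).2).symm

/-- three-way partition of the solution set comparing `k p` and `l p` -/
lemma sum_partition (n : ℕ) (f : ((ℕ × ℕ) × ℕ × ℕ) → ℚ) (k l : ((ℕ × ℕ) × ℕ × ℕ) → ℕ) :
    ∑ p ∈ sol n, f p
      = ∑ p ∈ (sol n).filter (fun p => l p < k p), f p
        + ∑ p ∈ (sol n).filter (fun p => k p < l p), f p
        + ∑ p ∈ (sol n).filter (fun p => k p = l p), f p := by
  classical
  rw [← Finset.sum_filter_add_sum_filter_not (sol n) (fun p => k p = l p) f]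
  rw [← Finset.sum_filter_add_sum_filter_not ((sol n).filter (fun p => ¬ k p = l p))
    (fun p => l p < k p) f]
  rw [Finset.filter_filter, Finset.filter_filter]
  have h1 : ((sol n).filter fun p => ¬k p = l p ∧ l p < k p)
      = (sol n).filter (fun p => l p < k p) := by
    apply Finset.filter_congr; intro p _
    constructor
    · exact fun h => h.2
    · exact fun h => ⟨by omega, h⟩
  have h2 : ((sol n).filter fun p => ¬k p = l p ∧ ¬ l p < k p)
      = (sol n).filter (fun p => k p < l p) := by
    apply Finset.filter_congr; intro p _
    constructor
    · intro h; omega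
    · intro h; omega
  rw [h1, h2]; ring

lemma ps2 (m : ℕ) : ∑ x ∈ Finset.range m, (x:ℚ)^2
    = (m:ℚ)^3/3 - (m:ℚ)^2/2 + (m:ℚ)/6 := by
  induction m with
  | zero => simp
  | succ k ih => rw [Finset.sum_range_succ, ih]; push_cast; ring

lemma ps3 (m : ℕ) : ∑ x ∈ Finset.range m, (x:ℚ)^3
    = (m:ℚ)^4/4 - (m:ℚ)^3/2 + (m:ℚ)^2/4 := by
  induction m with
  | zero => simp
  | succ k ih => rw [Finset.sum_range_succ, ih]; push_cast; ring

lemma ps4 (m : ℕ) : ∑ x ∈ Finset.range m, (x:ℚ)^4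
    = (m:ℚ)^5/5 - (m:ℚ)^4/2 + (m:ℚ)^3/3 - (m:ℚ)/30 := by
  induction m with
  | zero => simp
  | succ k ih => rw [Finset.sum_range_succ, ih]; push_cast; ring

lemma ps5 (m : ℕ) : ∑ x ∈ Finset.range m, (x:ℚ)^5
    = (m:ℚ)^6/6 - (m:ℚ)^5/2 + 5*(m:ℚ)^4/12 - (m:ℚ)^2/12 := by
  induction m with
  | zero => simp
  | succ k ih => rw [Finset.sum_range_succ, ih]; push_cast; ring

lemma ps6 (m : ℕ) : ∑ x ∈ Finset.range m, (x:ℚ)^6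
    = (m:ℚ)^7/7 - (m:ℚ)^6/2 + (m:ℚ)^5/2 - (m:ℚ)^3/6 + (m:ℚ)/42 := by
  induction m with
  | zero => simp
  | succ k ih => rw [Finset.sum_range_succ, ih]; push_cast; ring

/-- Faulhaber-type evaluation of the inner diagonal sum -/
lemma inner_eval (e : ℕ) :
    ∑ x ∈ Finset.Ioo 0 e, ((x:ℚ)^2 * ((e - x : ℕ):ℚ)^4 - (x:ℚ)^3 * ((e - x : ℕ):ℚ)^3)
      = ((e:ℚ)^7 - 21*(e:ℚ)^3 + 20*(e:ℚ))/420 := by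
  have hsub : ∀ x ∈ Finset.Ioo 0 e, ((x:ℚ)^2 * ((e - x : ℕ):ℚ)^4 - (x:ℚ)^3 * ((e - x : ℕ):ℚ)^3)
      = ((e:ℚ)^4*(x:ℚ)^2 - 5*(e:ℚ)^3*(x:ℚ)^3 + 9*(e:ℚ)^2*(x:ℚ)^4 - 7*(e:ℚ)*(x:ℚ)^5 + 2*(x:ℚ)^6) := by
    intro x hx
    simp only [Finset.mem_Ioo] at hx
    have hc : ((e - x : ℕ):ℚ) = (e:ℚ) - (x:ℚ) := by
      have : x ≤ e := le_of_lt hx.2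
      push_cast [this]; ring
    rw [hc]; ring
  rw [Finset.sum_congr rfl hsub]
  have hext : ∑ x ∈ Finset.Ioo 0 e,
      ((e:ℚ)^4*(x:ℚ)^2 - 5*(e:ℚ)^3*(x:ℚ)^3 + 9*(e:ℚ)^2*(x:ℚ)^4 - 7*(e:ℚ)*(x:ℚ)^5 + 2*(x:ℚ)^6)
      = ∑ x ∈ Finset.range e,
      ((e:ℚ)^4*(x:ℚ)^2 - 5*(e:ℚ)^3*(x:ℚ)^3 + 9*(e:ℚ)^2*(x:ℚ)^4 - 7*(e:ℚ)*(x:ℚ)^5 + 2*(x:ℚ)^6) := by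
    apply Finset.sum_subset
    · intro x hx; simp only [Finset.mem_Ioo] at hx; simp [Finset.mem_range, hx.2]
    · intro x hx hnx
      simp only [Finset.mem_range] at hx
      simp only [Finset.mem_Ioo] at hnx
      have : x = 0 := by omega
      simp [this]
  rw [hext]
  simp only [Finset.sum_add_distrib, Finset.sum_sub_distrib, ← Finset.mul_sum]
  rw [ps2, ps3, ps4, ps5, ps6]
  ring

/-- evaluation of the diagonal a = b sum -/
lemma diag_eval (n : ℕ) (g : ℕ → ℕ → ℚ) :
    ∑ p ∈ (sol n).filter (fun p => p.1.1 = p.2.1), g p.1.2 p.2.2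
      = ∑ de ∈ n.divisorsAntidiagonal, ∑ x ∈ Finset.Ioo 0 de.2, g x (de.2 - x) := by
  rw [Finset.sum_sigma']
  refine (Finset.sum_nbij' (fun q => ((q.1.1, q.2), (q.1.1, q.1.2 - q.2)))
    (fun p => ⟨(p.1.1, p.1.2 + p.2.2), p.1.2⟩) ?_ ?_ ?_ ?_ ?_).symm
  · rintro ⟨⟨d, e⟩, x⟩ hq
    simp only [Finset.mem_sigma, Nat.mem_divisorsAntidiagonal, Finset.mem_Ioo] at hq
    obtain ⟨⟨hde, hn⟩, hx0, hxe⟩ := hq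
    simp only [Finset.mem_filter, mem_sol]
    have hd : 0 < d := by
      rcases Nat.eq_zero_or_pos d with h | h
      · exfalso; apply hn; rw [← hde, h]; ring
      · exact h
    refine ⟨⟨?_, hd, hx0, hd, by omega⟩, trivial⟩
    have hs : x + (e - x) = e := by omega
    calc d * x + d * (e - x) = d * (x + (e - x)) := by ring
      _ = n := by rw [hs, hde]
  · rintro ⟨⟨a, x⟩, b, y⟩ hp
    simp only [Finset.mem_filter, mem_sol] at hp
    obtain ⟨⟨heq, ha, hx, hb, hy⟩, hab⟩ := hp
    simp only [Finset.mem_sigma, Nat.mem_divisorsAntidiagonal, Finset.mem_Ioo]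
    subst hab
    refine ⟨⟨by rw [Nat.mul_add]; exact heq, ?_⟩, hx, by omega⟩
    have := Nat.mul_pos ha hx
    omega
  · rintro ⟨⟨d, e⟩, x⟩ hq
    simp only [Finset.mem_sigma, Nat.mem_divisorsAntidiagonal, Finset.mem_Ioo] at hq
    obtain ⟨⟨hde, hn⟩, hx0, hxe⟩ := hq
    have hs : x + (e - x) = e := by omega
    simp only [hs]
  · rintro ⟨⟨a, x⟩, b, y⟩ hp
    simp only [Finset.mem_filter, mem_sol] at hp
    obtain ⟨⟨heq, ha, hx, hb, hy⟩, hab⟩ := hp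
    subst hab
    have hs : x + y - x = y := by omega
    simp only [hs]
  · rintro ⟨⟨d, e⟩, x⟩ hq
    rfl

/-- The core elementary identity:
`4 * ∑_{ax+by=n, b<a} x³y³ = ∑_{ax+by=n, a=b} (x²y⁴ - x³y³)`. -/
lemma core (n : ℕ) :
    4 * ∑ p ∈ (sol n).filter (fun p => p.2.1 < p.1.1), (p.1.2:ℚ)^3 * (p.2.2:ℚ)^3
      = ∑ p ∈ (sol n).filter (fun p => p.1.1 = p.2.1),
          ((p.1.2:ℚ)^2 * (p.2.2:ℚ)^4 - (p.1.2:ℚ)^3 * (p.2.2:ℚ)^3) := by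
  classical
  set F33 : ((ℕ × ℕ) × ℕ × ℕ) → ℚ := fun p => (p.1.2:ℚ)^3 * (p.2.2:ℚ)^3 with hF33
  set F24 : ((ℕ × ℕ) × ℕ × ℕ) → ℚ := fun p => (p.1.2:ℚ)^2 * (p.2.2:ℚ)^4 with hF24
  set F42 : ((ℕ × ℕ) × ℕ × ℕ) → ℚ := fun p => (p.1.2:ℚ)^4 * (p.2.2:ℚ)^2 with hF42
  set G33 : ((ℕ × ℕ) × ℕ × ℕ) → ℚ := fun p => (p.1.1:ℚ)^3 * (p.2.1:ℚ)^3 with hG33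
  set G24 : ((ℕ × ℕ) × ℕ × ℕ) → ℚ := fun p => (p.1.1:ℚ)^2 * (p.2.1:ℚ)^4 with hG24
  set G42 : ((ℕ × ℕ) × ℕ × ℕ) → ℚ := fun p => (p.1.1:ℚ)^4 * (p.2.1:ℚ)^2 with hG42
  -- x-partitions
  have e1 := sum_partition n F33 (fun p => p.1.2) (fun p => p.2.2)
  have e1' : ∑ p ∈ (sol n).filter (fun p => p.1.2 < p.2.2), F33 p
      = ∑ p ∈ (sol n).filter (fun p => p.2.2 < p.1.2), F33 p := by
    rw [sum_swap_pred n F33 (fun p => p.1.2 < p.2.2)]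
    apply Finset.sum_congr rfl
    intro p _; simp only [hF33]; ring
  have e3 := sum_partition n F24 (fun p => p.1.2) (fun p => p.2.2)
  have e3' : ∑ p ∈ (sol n).filter (fun p => p.1.2 < p.2.2), F24 p
      = ∑ p ∈ (sol n).filter (fun p => p.2.2 < p.1.2), F42 p := by
    rw [sum_swap_pred n F24 (fun p => p.1.2 < p.2.2)]
    apply Finset.sum_congr rfl
    intro p _; simp only [hF24, hF42]; ring
  have e3'' : ∑ p ∈ (sol n).filter (fun p => p.1.2 = p.2.2), F24 p
      = ∑ p ∈ (sol n).filter (fun p => p.1.2 = p.2.2), F33 p := by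
    apply Finset.sum_congr rfl
    intro p hp
    simp only [Finset.mem_filter] at hp
    simp only [hF24, hF33, hp.2]; ring
  -- a-partitions
  have e2 := sum_partition n F33 (fun p => p.1.1) (fun p => p.2.1)
  have e2' : ∑ p ∈ (sol n).filter (fun p => p.1.1 < p.2.1), F33 p
      = ∑ p ∈ (sol n).filter (fun p => p.2.1 < p.1.1), F33 p := by
    rw [sum_swap_pred n F33 (fun p => p.1.1 < p.2.1)]
    apply Finset.sum_congr rfl
    intro p _; simp only [hF33]; ring
  have e4 := sum_partition n F24 (fun p => p.1.1) (fun p => p.2.1)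
  have e4' : ∑ p ∈ (sol n).filter (fun p => p.1.1 < p.2.1), F24 p
      = ∑ p ∈ (sol n).filter (fun p => p.2.1 < p.1.1), F42 p := by
    rw [sum_swap_pred n F24 (fun p => p.1.1 < p.2.1)]
    apply Finset.sum_congr rfl
    intro p _; simp only [hF24, hF42]; ring
  -- duality
  have e5 : ∑ p ∈ (sol n).filter (fun p => p.2.1 < p.1.1), F24 p
      = ∑ p ∈ (sol n).filter (fun p => p.2.2 < p.1.2), G24 p := by
    rw [sum_dual n F24 (fun p => p.2.1 < p.1.1)]
  have e6 : ∑ p ∈ (sol n).filter (fun p => p.2.1 < p.1.1), F42 p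
      = ∑ p ∈ (sol n).filter (fun p => p.2.2 < p.1.2), G42 p := by
    rw [sum_dual n F42 (fun p => p.2.1 < p.1.1)]
  have e7 : ∑ p ∈ (sol n).filter (fun p => p.2.1 < p.1.1), F33 p
      = ∑ p ∈ (sol n).filter (fun p => p.2.2 < p.1.2), G33 p := by
    rw [sum_dual n F33 (fun p => p.2.1 < p.1.1)]
  -- the involution identity
  have e8 : ∑ p ∈ (sol n).filter (fun p => p.2.2 < p.1.2),
        (2 * F33 p - F24 p - F42 p)
      = ∑ p ∈ (sol n).filter (fun p => p.2.2 < p.1.2),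
        (-(G24 p + 2 * G33 p + G42 p)) := by
    rw [sum_invol n (fun p => 2 * F33 p - F24 p - F42 p)]
    apply Finset.sum_congr rfl
    intro p _
    simp only [hF33, hF24, hF42, hG24, hG33, hG42]
    push_cast
    ring
  have e8' : 2 * (∑ p ∈ (sol n).filter (fun p => p.2.2 < p.1.2), F33 p)
        - (∑ p ∈ (sol n).filter (fun p => p.2.2 < p.1.2), F24 p)
        - (∑ p ∈ (sol n).filter (fun p => p.2.2 < p.1.2), F42 p)
      = -((∑ p ∈ (sol n).filter (fun p => p.2.2 < p.1.2), G24 p)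
        + 2 * (∑ p ∈ (sol n).filter (fun p => p.2.2 < p.1.2), G33 p)
        + (∑ p ∈ (sol n).filter (fun p => p.2.2 < p.1.2), G42 p)) := by
    have l1 := e8
    simp only [Finset.sum_sub_distrib, Finset.sum_add_distrib, Finset.sum_neg_distrib,
      ← Finset.mul_sum] at l1
    linarith [l1]
  -- the diagonal x = y sums of F24 and F33 agree
  have e9 : ∑ p ∈ (sol n).filter (fun p => p.1.2 = p.2.2), F33 p
      = ∑ p ∈ (sol n).filter (fun p => p.1.2 = p.2.2), F33 p := rfl
  -- assemble
  have goal' : 4 * ∑ p ∈ (sol n).filter (fun p => p.2.1 < p.1.1), F33 p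
      = ∑ p ∈ (sol n).filter (fun p => p.1.1 = p.2.1), (F24 p - F33 p) := by
    have hsplit : ∑ p ∈ (sol n).filter (fun p => p.1.1 = p.2.1), (F24 p - F33 p)
        = (∑ p ∈ (sol n).filter (fun p => p.1.1 = p.2.1), F24 p)
          - ∑ p ∈ (sol n).filter (fun p => p.1.1 = p.2.1), F33 p := by
      rw [Finset.sum_sub_distrib]
    rw [hsplit]
    linarith [e1, e1', e2, e2', e3, e3', e3'', e4, e4', e5, e6, e7, e8']
  calc 4 * ∑ p ∈ (sol n).filter (fun p => p.2.1 < p.1.1), (p.1.2:ℚ)^3 * (p.2.2:ℚ)^3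
      = 4 * ∑ p ∈ (sol n).filter (fun p => p.2.1 < p.1.1), F33 p := rfl
    _ = ∑ p ∈ (sol n).filter (fun p => p.1.1 = p.2.1), (F24 p - F33 p) := goal'
    _ = _ := rfl


lemma msigma_one (k n : ℕ) : msigma ![k] n = ∑ d ∈ n.divisors, d ^ k := by
  rw [msigma]
  rw [show (∑ d ∈ n.divisors, d ^ k) = ∑ i ∈ n.divisorsAntidiagonal, i.2 ^ k from
    (Nat.sum_divisorsAntidiagonal' (fun _ b => b ^ k)).symm]
  refine Finset.sum_nbij' (fun f => f 0) (fun d => fun _ => d) ?_ ?_ ?_ ?_ ?_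
  · intro f hf
    simp only [Finset.mem_filter, Fintype.mem_piFinset] at hf
    obtain ⟨hmem, heq, h1, h2, -⟩ := hf
    rw [Fin.sum_univ_one] at heq
    simp only [Nat.mem_divisorsAntidiagonal]
    refine ⟨heq, ?_⟩
    have := Nat.mul_pos (h1 0) (h2 0)
    omega
  · intro d hd
    simp only [Nat.mem_divisorsAntidiagonal] at hd
    obtain ⟨hde, hn⟩ := hd
    simp only [Finset.mem_filter, Fintype.mem_piFinset]
    have h1 : 0 < d.1 := by
      rcases Nat.eq_zero_or_pos d.1 with h | h
      · exfalso; apply hn; rw [← hde, h]; ring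
      · exact h
    have h2 : 0 < d.2 := by
      rcases Nat.eq_zero_or_pos d.2 with h | h
      · exfalso; apply hn; rw [← hde, h]; ring
      · exact h
    refine ⟨?_, by rw [Fin.sum_univ_one]; exact hde, fun _ => h1, fun _ => h2, ?_⟩
    · intro i
      simp only [Finset.mem_product, Finset.mem_range]
      constructor <;> rw [Nat.lt_succ_iff] <;> rw [← hde] <;> nlinarith
    · intro i j hij
      exact absurd (Subsingleton.elim i j ▸ hij) (lt_irrefl _)
  · intro f hf
    funext i
    have : i = 0 := Subsingleton.elim i 0
    rw [this]
  · intro d hd; rfl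
  · intro f hf
    rw [Fin.prod_univ_one]
    rfl

lemma msigma_two (n : ℕ) :
    msigma ![3, 3] n
      = ∑ p ∈ (sol n).filter (fun p => p.2.1 < p.1.1), p.1.2 ^ 3 * p.2.2 ^ 3 := by
  rw [msigma]
  refine Finset.sum_nbij' (fun f => (f 0, f 1)) (fun p => ![p.1, p.2]) ?_ ?_ ?_ ?_ ?_
  · intro f hf
    simp only [Finset.mem_filter, Fintype.mem_piFinset] at hf
    obtain ⟨hmem, heq, h1, h2, h3⟩ := hf
    rw [Fin.sum_univ_two] at heq
    simp only [Finset.mem_filter, mem_sol]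
    exact ⟨⟨heq, h1 0, h2 0, h1 1, h2 1⟩, h3 0 1 (by decide)⟩
  · intro p hp
    simp only [Finset.mem_filter, mem_sol] at hp
    obtain ⟨⟨heq, ha, hx, hb, hy⟩, hab⟩ := hp
    simp only [Finset.mem_filter, Fintype.mem_piFinset]
    refine ⟨?_, ?_, ?_, ?_, ?_⟩
    · intro i
      have hv : (![p.1, p.2] i) = p.1 ∨ (![p.1, p.2] i) = p.2 := by fin_cases i <;> simp
      simp only [Finset.mem_product, Finset.mem_range]
      rcases hv with h | h <;> rw [h] <;> constructor <;> rw [Nat.lt_succ_iff] <;> nlinarith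
    · rw [Fin.sum_univ_two]
      simpa using heq
    · intro i; fin_cases i <;> simpa
    · intro i; fin_cases i <;> simpa
    · intro i j hij
      fin_cases i <;> fin_cases j <;> simp_all <;> omega
  · intro f hf
    funext i
    fin_cases i <;> rfl
  · intro p hp; rfl
  · intro f hf
    rw [Fin.prod_univ_two]
    rfl

/-- The key arithmetic identity. -/
lemma key (n : ℕ) :
    (msigma ![7] n : ℚ) + 20 * (msigma ![1] n : ℚ)
      = 21 * (msigma ![3] n : ℚ) + 1680 * (msigma ![3, 3] n : ℚ) := by
  have h7 : (msigma ![7] n : ℚ) = ∑ d ∈ n.divisors, (d:ℚ) ^ 7 := by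
    rw [msigma_one]; push_cast; rfl
  have h3 : (msigma ![3] n : ℚ) = ∑ d ∈ n.divisors, (d:ℚ) ^ 3 := by
    rw [msigma_one]; push_cast; rfl
  have h1 : (msigma ![1] n : ℚ) = ∑ d ∈ n.divisors, (d:ℚ) := by
    rw [msigma_one]; push_cast [pow_one]; rfl
  have h33 : (msigma ![3, 3] n : ℚ)
      = ∑ p ∈ (sol n).filter (fun p => p.2.1 < p.1.1), (p.1.2:ℚ)^3 * (p.2.2:ℚ)^3 := by
    rw [msigma_two]; push_cast; rfl
  have hcore := core n
  have hdiag := diag_eval n (fun x y => (x:ℚ)^2 * (y:ℚ)^4 - (x:ℚ)^3 * (y:ℚ)^3)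
  have hinner : ∀ de ∈ n.divisorsAntidiagonal,
      (∑ x ∈ Finset.Ioo 0 de.2,
        ((x:ℚ)^2 * ((de.2 - x : ℕ):ℚ)^4 - (x:ℚ)^3 * ((de.2 - x : ℕ):ℚ)^3))
      = ((de.2:ℚ)^7 - 21*(de.2:ℚ)^3 + 20*(de.2:ℚ))/420 := fun de _ => inner_eval de.2
  rw [Finset.sum_congr rfl hinner] at hdiag
  have hanti : ∑ de ∈ n.divisorsAntidiagonal, ((de.2:ℚ)^7 - 21*(de.2:ℚ)^3 + 20*(de.2:ℚ))/420
      = ∑ d ∈ n.divisors, ((d:ℚ)^7 - 21*(d:ℚ)^3 + 20*(d:ℚ))/420 :=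
    Nat.sum_divisorsAntidiagonal' (fun _ b => ((b:ℚ)^7 - 21*(b:ℚ)^3 + 20*(b:ℚ))/420)
  rw [hanti] at hdiag
  have hsplit : ∑ d ∈ n.divisors, ((d:ℚ)^7 - 21*(d:ℚ)^3 + 20*(d:ℚ))/420
      = ((∑ d ∈ n.divisors, (d:ℚ)^7) - 21*(∑ d ∈ n.divisors, (d:ℚ)^3)
          + 20*(∑ d ∈ n.divisors, (d:ℚ)))/420 := by
    rw [← Finset.sum_div]
    congr 1
    rw [Finset.sum_add_distrib, Finset.sum_sub_distrib, ← Finset.mul_sum, ← Finset.mul_sum]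
  have hfinal := hcore.trans (hdiag.trans hsplit)
  rw [h7, h3, h1, h33]
  linarith [hfinal]

end BrAux

theorem bracket_eight_relation :
    bracket ![8] =
      (1 / 40 : ℚ) • bracket ![4] - (1 / 252 : ℚ) • bracket ![2] +
        (12 : ℚ) • bracket ![4, 4] := by
  apply PowerSeries.ext
  intro n
  have h8 : (fun i => (![8] : Fin 1 → ℕ) i - 1) = ![7] := by
    funext i; fin_cases i; rfl
  have h4 : (fun i => (![4] : Fin 1 → ℕ) i - 1) = ![3] := by
    funext i; fin_cases i; rfl
  have h2 : (fun i => (![2] : Fin 1 → ℕ) i - 1) = ![1] := by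
    funext i; fin_cases i; rfl
  have h44 : (fun i => (![4, 4] : Fin 2 → ℕ) i - 1) = ![3, 3] := by
    funext i; fin_cases i <;> rfl
  simp only [bracket, map_add, map_sub, PowerSeries.coeff_mk, map_smul, smul_eq_mul,
    h8, h4, h2, h44]
  have hp1 : ∏ i : Fin 1, (((![8] : Fin 1 → ℕ) i - 1).factorial : ℚ) = 5040 := by
    norm_num [Fin.prod_univ_one, Nat.factorial]
  have hp2 : ∏ i : Fin 1, (((![4] : Fin 1 → ℕ) i - 1).factorial : ℚ) = 6 := by
    norm_num [Fin.prod_univ_one, Nat.factorial]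
  have hp3 : ∏ i : Fin 1, (((![2] : Fin 1 → ℕ) i - 1).factorial : ℚ) = 1 := by
    norm_num [Fin.prod_univ_one, Nat.factorial]
  have hp4 : ∏ i : Fin 2, (((![4, 4] : Fin 2 → ℕ) i - 1).factorial : ℚ) = 36 := by
    norm_num [Fin.prod_univ_two, Nat.factorial]
  rw [hp1, hp2, hp3, hp4]
  have hk := BrAux.key n
  linarith [hk]
end
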